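/- For each fixed ρ > 1 there is a constant C ≥ 1, depending only on ρ, d, n, C₀ and β_d, such that C^{-1}·‖f‖_* ≤ ‖f‖_{**,(ρ)} ≤ C·‖f‖_* for every f ∈ L¹_loc(μ). Moreover, the choice f_Q = m_{Q̃} f for all cubes Q realizes the two defining conditions of ‖·‖_{**,(ρ)} with constant C·‖f‖_*. -/

import Mathlib

/-!
Common definitions for formalizing Tolsa, "BMO, H¹, and Calderón–Zygmund
operators for non doubling measures".
-/

open MeasureTheory Metric Set Function
open scoped Classical
open scoped ENNReal NNReal BigOperators

noncomputable section

/-- `ℝ^d` with the Euclidean metric. -/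
abbrev Euc (d : ℕ) := EuclideanSpace ℝ (Fin d)

variable {d : ℕ}

/-- The support of a measure: points all of whose balls have positive measure. -/
def measSupp (μ : MeasureTheory.Measure (Euc d)) : Set (Euc d) :=
  {x | ∀ r : ℝ, 0 < r → 0 < μ (Metric.ball x r)}

/-- The growth condition `μ(B(x,r)) ≤ C₀ rⁿ`. -/
def GrowthBound (μ : MeasureTheory.Measure (Euc d)) (n : ℕ) (C₀ : ℝ) : Prop :=
  ∀ (x : Euc d) (r : ℝ), 0 < r → μ (Metric.ball x r) ≤ ENNReal.ofReal (C₀ * r ^ n)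

/-- A (closed, axis-parallel) cube with center in the support of `μ` and positive
side length. -/
structure CubeOf (μ : MeasureTheory.Measure (Euc d)) where
  c : Euc d
  ℓ : ℝ
  ℓ_pos : 0 < ℓ
  c_mem : c ∈ measSupp μ

namespace CubeOf

variable {μ : MeasureTheory.Measure (Euc d)}

/-- The set of points of a cube. -/
def set (Q : CubeOf μ) : Set (Euc d) := {y | ∀ i, |y i - Q.c i| ≤ Q.ℓ / 2}

/-- The concentric dilation `aQ` of a cube, as a set. -/
def dil (Q : CubeOf μ) (a : ℝ) : Set (Euc d) := {y | ∀ i, |y i - Q.c i| ≤ a * Q.ℓ / 2}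

/-- The cube `2^k Q`. -/
def pow2 (Q : CubeOf μ) (k : ℕ) : CubeOf μ :=
  ⟨Q.c, 2 ^ k * Q.ℓ, mul_pos (by positivity) Q.ℓ_pos, Q.c_mem⟩

/-- The cube `6^k Q`. -/
def pow6 (Q : CubeOf μ) (k : ℕ) : CubeOf μ :=
  ⟨Q.c, 6 ^ k * Q.ℓ, mul_pos (by positivity) Q.ℓ_pos, Q.c_mem⟩

end CubeOf

/-- `(α,β)`-doubling cube: `μ(αQ) ≤ β μ(Q)`. -/
def IsDoubling (μ : MeasureTheory.Measure (Euc d)) (α β : ℝ) (Q : CubeOf μ) : Prop :=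
  μ (Q.dil α) ≤ ENNReal.ofReal β * μ Q.set

/-- `N_{Q,R}`: the first integer `k ≥ 1` such that `l(2^k Q) ≥ l(R)`. -/
def NQR {μ : MeasureTheory.Measure (Euc d)} (Q R : CubeOf μ) : ℕ :=
  sInf {k : ℕ | 1 ≤ k ∧ R.ℓ ≤ 2 ^ k * Q.ℓ}

/-- The coefficient `K_{Q,R} = 1 + ∑_{k=1}^{N_{Q,R}} μ(2^k Q)/l(2^k Q)^n`. -/
def Kcoef {μ : MeasureTheory.Measure (Euc d)} (n : ℕ) (Q R : CubeOf μ) : ℝ :=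
  1 + ∑ k ∈ Finset.Icc 1 (NQR Q R), (μ ((Q.pow2 k).set)).toReal / ((2 ^ k * Q.ℓ) ^ n)

/-- The smallest `N ≥ 0` such that `2^N Q` is `(2,βd)`-doubling. -/
def tildeIdx (μ : MeasureTheory.Measure (Euc d)) (βd : ℝ) (Q : CubeOf μ) : ℕ :=
  sInf {N : ℕ | IsDoubling μ 2 βd (Q.pow2 N)}

/-- The cube `Q̃`: the smallest cube `2^N Q`, `N ≥ 0`, which is `(2,βd)`-doubling. -/
def CubeOf.tilde {μ : MeasureTheory.Measure (Euc d)} (Q : CubeOf μ) (βd : ℝ) : CubeOf μ :=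
  Q.pow2 (tildeIdx μ βd Q)

/-- The mean `m_Q f` of `f` over the cube `Q` with respect to `μ`. -/
def mQ (μ : MeasureTheory.Measure (Euc d)) (Q : CubeOf μ) (f : Euc d → ℝ) : ℝ :=
  ⨍ x in Q.set, f x ∂μ

/-- For `μ`-a.e. `x` there are `(2,βd)`-doubling cubes centered at `x` of arbitrarily
small side length. -/
def SmallDoublingAE (μ : MeasureTheory.Measure (Euc d)) (βd : ℝ) : Prop :=
  ∀ᵐ x ∂μ, ∀ ℓ₀ : ℝ, 0 < ℓ₀ → ∃ Q : CubeOf μ, Q.c = x ∧ Q.ℓ < ℓ₀ ∧ IsDoubling μ 2 βd Q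

/-- `C` is an admissible constant in the definition of the `RBMO(μ)` norm of `f`. -/
def RBMOBoundWith (μ : MeasureTheory.Measure (Euc d)) (n : ℕ) (βd : ℝ)
    (f : Euc d → ℝ) (C : ℝ≥0∞) : Prop :=
  (∀ Q : CubeOf μ,
    ∫⁻ x in Q.set, ENNReal.ofReal |f x - mQ μ (Q.tilde βd) f| ∂μ ≤ C * μ (Q.dil 2)) ∧
  (∀ Q R : CubeOf μ, Q.set ⊆ R.set → IsDoubling μ 2 βd Q → IsDoubling μ 2 βd R →
    ENNReal.ofReal |mQ μ Q f - mQ μ R f| ≤ C * ENNReal.ofReal (Kcoef n Q R))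

/-- The `RBMO(μ)` norm `‖f‖_*` (with value `∞` if `f ∉ RBMO(μ)`). -/
def rbmoNorm (μ : MeasureTheory.Measure (Euc d)) (n : ℕ) (βd : ℝ) (f : Euc d → ℝ) : ℝ≥0∞ :=
  sInf {C | RBMOBoundWith μ n βd f C}

/-- The conditions defining `‖f‖_{**,(ρ)}`, for a given family of numbers `fQ`. -/
def StarStarBoundWith (μ : MeasureTheory.Measure (Euc d)) (n : ℕ) (ρ : ℝ)
    (f : Euc d → ℝ) (fQ : CubeOf μ → ℝ) (C : ℝ≥0∞) : Prop :=
  (∀ Q : CubeOf μ, ∫⁻ x in Q.set, ENNReal.ofReal |f x - fQ Q| ∂μ ≤ C * μ (Q.dil ρ)) ∧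
  (∀ Q R : CubeOf μ, Q.set ⊆ R.set →
    ENNReal.ofReal |fQ Q - fQ R| ≤ C * ENNReal.ofReal (Kcoef n Q R))

/-- The norm `‖f‖_{**,(ρ)}`. -/
def starStarNorm (μ : MeasureTheory.Measure (Euc d)) (n : ℕ) (ρ : ℝ) (f : Euc d → ℝ) : ℝ≥0∞ :=
  sInf {C | ∃ fQ : CubeOf μ → ℝ, StarStarBoundWith μ n ρ f fQ C}

end

noncomputable section

variable {d : ℕ}

/-- The conditions defining the `RBMO^p(μ)` norm. -/
def RBMOpBoundWith (μ : MeasureTheory.Measure (Euc d)) (n : ℕ) (βd : ℝ) (p : ℝ)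
    (f : Euc d → ℝ) (C : ℝ≥0∞) : Prop :=
  (∀ Q : CubeOf μ,
    ∫⁻ x in Q.set, ENNReal.ofReal |f x - mQ μ (Q.tilde βd) f| ^ p ∂μ ≤ C ^ p * μ (Q.dil 2)) ∧
  (∀ Q R : CubeOf μ, Q.set ⊆ R.set → IsDoubling μ 2 βd Q → IsDoubling μ 2 βd R →
    ENNReal.ofReal |mQ μ Q f - mQ μ R f| ≤ C * ENNReal.ofReal (Kcoef n Q R))

/-- The `RBMO^p(μ)` norm `‖f‖_{*,p}`. -/
def rbmoPNorm (μ : MeasureTheory.Measure (Euc d)) (n : ℕ) (βd : ℝ) (p : ℝ)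
    (f : Euc d → ℝ) : ℝ≥0∞ :=
  sInf {C | RBMOpBoundWith μ n βd p f C}

/-- Condition (b) of Lemma `fifi` of the paper, with constant `Cb`. -/
def CondB (μ : MeasureTheory.Measure (Euc d)) (n : ℕ) (ρ : ℝ)
    (f : Euc d → ℝ) (Cb : ℝ≥0∞) : Prop :=
  (∀ Q : CubeOf μ, ∫⁻ x in Q.set, ENNReal.ofReal |f x - mQ μ Q f| ∂μ ≤ Cb * μ (Q.dil ρ)) ∧
  (∀ Q R : CubeOf μ, Q.set ⊆ R.set →
    ENNReal.ofReal |mQ μ Q f - mQ μ R f| ≤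
      Cb * ENNReal.ofReal (Kcoef n Q R) * (μ (Q.dil ρ) / μ Q.set + μ (R.dil ρ) / μ R.set))

/-- Condition (c) of Lemma `fifi` of the paper, with constant `Cc`. -/
def CondC (μ : MeasureTheory.Measure (Euc d)) (n : ℕ) (βd : ℝ)
    (f : Euc d → ℝ) (Cc : ℝ≥0∞) : Prop :=
  (∀ Q : CubeOf μ, IsDoubling μ 2 βd Q →
    ∫⁻ x in Q.set, ENNReal.ofReal |f x - mQ μ Q f| ∂μ ≤ Cc * μ Q.set) ∧
  (∀ Q R : CubeOf μ, Q.set ⊆ R.set → IsDoubling μ 2 βd Q → IsDoubling μ 2 βd R →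
    ENNReal.ofReal |mQ μ Q f - mQ μ R f| ≤ Cc * ENNReal.ofReal (Kcoef n Q R))

/-- The conditions defining the norm `‖f‖_∘`, relative to a choice `αQ` of minimizers. -/
def CircBoundWith (μ : MeasureTheory.Measure (Euc d)) (n : ℕ) (βd : ℝ)
    (f : Euc d → ℝ) (αQ : CubeOf μ → ℝ) (C : ℝ≥0∞) : Prop :=
  (∀ Q : CubeOf μ,
    ∫⁻ x in Q.set, ENNReal.ofReal |f x - αQ (Q.tilde βd)| ∂μ ≤ C * μ (Q.dil 2)) ∧
  (∀ Q R : CubeOf μ, Q.set ⊆ R.set → IsDoubling μ 2 βd Q → IsDoubling μ 2 βd R →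
    ENNReal.ofReal |αQ Q - αQ R| ≤ C * ENNReal.ofReal (Kcoef n Q R))

/-- The norm `‖f‖_∘`, relative to a choice `αQ` of minimizers. -/
def circNorm (μ : MeasureTheory.Measure (Euc d)) (n : ℕ) (βd : ℝ)
    (f : Euc d → ℝ) (αQ : CubeOf μ → ℝ) : ℝ≥0∞ :=
  sInf {C | CircBoundWith μ n βd f αQ C}

/-- An atomic block: a function supported on a cube `R`, with zero integral, of the
form `b = ∑ λⱼ aⱼ` with `aⱼ` supported on cubes `Qⱼ ⊆ R` and
`‖aⱼ‖_{L∞(μ)} ≤ (μ(2Qⱼ) K_{Qⱼ,R})⁻¹`. -/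
structure AtomicBlock (μ : MeasureTheory.Measure (Euc d)) (n : ℕ) where
  b : Euc d → ℝ
  R : CubeOf μ
  lam : ℕ → ℝ
  a : ℕ → Euc d → ℝ
  Qj : ℕ → CubeOf μ
  integrable : MeasureTheory.Integrable b μ
  supp_b : ∀ x ∉ R.set, b x = 0
  int_zero : ∫ x, b x ∂μ = 0
  Qj_sub : ∀ j, (Qj j).set ⊆ R.set
  a_supp : ∀ j, ∀ x ∉ (Qj j).set, a j x = 0
  a_meas : ∀ j, MeasureTheory.AEStronglyMeasurable (a j) μ
  a_bound : ∀ j, MeasureTheory.eLpNorm (a j) ⊤ μ ≤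
    (μ ((Qj j).dil 2) * ENNReal.ofReal (Kcoef n (Qj j) R))⁻¹
  lam_summable : Summable fun j => |lam j|
  b_eq : ∀ᵐ x ∂μ, HasSum (fun j => lam j * a j x) (b x)

/-- `|b|_{H^{1,∞}_atb(μ)} = ∑ⱼ |λⱼ|` for the given decomposition. -/
def AtomicBlock.size {μ : MeasureTheory.Measure (Euc d)} {n : ℕ}
    (B : AtomicBlock μ n) : ℝ :=
  ∑' j, |B.lam j|

/-- The `H^{1,∞}_atb(μ)` norm (with value `∞` outside the space). -/
def hatbNorm (μ : MeasureTheory.Measure (Euc d)) (n : ℕ) (f : Euc d → ℝ) : ℝ≥0∞ :=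
  sInf {t : ℝ≥0∞ | ∃ B : ℕ → AtomicBlock μ n,
    (∀ᵐ x ∂μ, HasSum (fun i => (B i).b x) (f x)) ∧
    t = ∑' i, ENNReal.ofReal ((B i).size)}

/-- A `p`-atomic block: like an atomic block, but with the size condition
`‖aⱼ‖_{L^p(μ)} ≤ μ(2Qⱼ)^{1/p-1} K_{Qⱼ,R}⁻¹`. -/
structure PAtomicBlock (μ : MeasureTheory.Measure (Euc d)) (n : ℕ) (p : ℝ) where
  b : Euc d → ℝ
  R : CubeOf μ
  lam : ℕ → ℝ
  a : ℕ → Euc d → ℝ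
  Qj : ℕ → CubeOf μ
  integrable : MeasureTheory.Integrable b μ
  supp_b : ∀ x ∉ R.set, b x = 0
  int_zero : ∫ x, b x ∂μ = 0
  Qj_sub : ∀ j, (Qj j).set ⊆ R.set
  a_supp : ∀ j, ∀ x ∉ (Qj j).set, a j x = 0
  a_meas : ∀ j, MeasureTheory.AEStronglyMeasurable (a j) μ
  a_bound : ∀ j, MeasureTheory.eLpNorm (a j) (ENNReal.ofReal p) μ ≤
    μ ((Qj j).dil 2) ^ (1 / p - 1) * (ENNReal.ofReal (Kcoef n (Qj j) R))⁻¹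
  lam_summable : Summable fun j => |lam j|
  b_eq : ∀ᵐ x ∂μ, HasSum (fun j => lam j * a j x) (b x)

/-- `|b|_{H^{1,p}_atb(μ)} = ∑ⱼ |λⱼ|` for the given decomposition. -/
def PAtomicBlock.size {μ : MeasureTheory.Measure (Euc d)} {n : ℕ} {p : ℝ}
    (B : PAtomicBlock μ n p) : ℝ :=
  ∑' j, |B.lam j|

/-- The `H^{1,p}_atb(μ)` norm (with value `∞` outside the space). -/
def hatbPNorm (μ : MeasureTheory.Measure (Euc d)) (n : ℕ) (p : ℝ) (f : Euc d → ℝ) : ℝ≥0∞ :=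
  sInf {t : ℝ≥0∞ | ∃ B : ℕ → PAtomicBlock μ n p,
    (∀ᵐ x ∂μ, HasSum (fun i => (B i).b x) (f x)) ∧
    t = ∑' i, ENNReal.ofReal ((B i).size)}

/-- A Calderón–Zygmund kernel of dimension `n`, with constant `Ck` and Hölder
exponent `δ`. -/
def CZKernelBound (n : ℕ) (k : Euc d → Euc d → ℝ) (Ck δ : ℝ) : Prop :=
  (∀ x y : Euc d, x ≠ y → |k x y| ≤ Ck / dist x y ^ (n : ℝ)) ∧
  (∀ x x' y : Euc d, x ≠ y → dist x x' ≤ dist x y / 2 →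
    |k x y - k x' y| + |k y x - k y x'| ≤ Ck * dist x x' ^ δ / dist x y ^ ((n : ℝ) + δ))

/-- The truncated operator `T_ε f(x) = ∫_{|x-y|>ε} k(x,y) f(y) dμ(y)`. -/
def trunc (μ : MeasureTheory.Measure (Euc d)) (k : Euc d → Euc d → ℝ) (ε : ℝ)
    (f : Euc d → ℝ) (x : Euc d) : ℝ :=
  ∫ y in {y | ε < dist x y}, k x y * f y ∂μ

/-- The non-centered doubling maximal operator `N`. -/
def Nop (μ : MeasureTheory.Measure (Euc d)) (βd : ℝ) (f : Euc d → ℝ) (x : Euc d) : ℝ≥0∞ :=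
  ⨆ (Q : CubeOf μ) (_ : x ∈ Q.set) (_ : IsDoubling μ 2 βd Q),
    (∫⁻ y in Q.set, ENNReal.ofReal |f y| ∂μ) / μ Q.set

/-- The sharp maximal operator `M^♯`. -/
def Msharp (μ : MeasureTheory.Measure (Euc d)) (n : ℕ) (βd : ℝ)
    (f : Euc d → ℝ) (x : Euc d) : ℝ≥0∞ :=
  (⨆ (Q : CubeOf μ) (_ : x ∈ Q.set),
    (∫⁻ y in Q.set, ENNReal.ofReal |f y - mQ μ (Q.tilde βd) f| ∂μ) / μ (Q.dil (3/2))) +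
  ⨆ (Q : CubeOf μ) (R : CubeOf μ) (_ : x ∈ Q.set) (_ : Q.set ⊆ R.set)
      (_ : IsDoubling μ 2 βd Q) (_ : IsDoubling μ 2 βd R),
    ENNReal.ofReal (|mQ μ Q f - mQ μ R f| / Kcoef n Q R)

/-- The weight functions `w_i = χ_{Q_i} / ∑_k χ_{Q_k}` of the Calderón–Zygmund
decomposition. -/
def czWeight {μ : MeasureTheory.Measure (Euc d)} (J : Finset ℕ) (Q : ℕ → CubeOf μ)
    (i : ℕ) (x : Euc d) : ℝ :=
  Set.indicator (Q i).set
    (fun y => (((J.filter fun kk => y ∈ (Q kk).set).card : ℝ))⁻¹) x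

/-- The smallest `(6,6^{n+1})`-doubling cube of the form `6^k Q`, `k ≥ 1`. -/
def smallest6Doubling (μ : MeasureTheory.Measure (Euc d)) (n : ℕ) (Q : CubeOf μ) : CubeOf μ :=
  Q.pow6 (sInf {k : ℕ | 1 ≤ k ∧ IsDoubling μ 6 (6 ^ (n + 1)) (Q.pow6 k)})

end

namespace Tolsa28

open MeasureTheory Metric Set
open scoped ENNReal

variable {d : ℕ} {μ : MeasureTheory.Measure (Euc d)}

/-! ### Cube geometry -/

lemma cube_ext {Q R : CubeOf μ} (hc : Q.c = R.c) (hl : Q.ℓ = R.ℓ) : Q = R := by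
  cases Q; cases R
  cases hc; cases hl; rfl

lemma c_mem_set (Q : CubeOf μ) : Q.c ∈ Q.set := by
  intro i
  simp only [sub_self, abs_zero]
  have := Q.ℓ_pos; positivity

lemma dil_one (Q : CubeOf μ) : Q.dil 1 = Q.set := by
  ext y; simp [CubeOf.dil, CubeOf.set]

lemma dil_subset_dil {X S : CubeOf μ} {a b e : ℝ} (he : ∀ i, |X.c i - S.c i| ≤ e)
    (h : a * X.ℓ + 2 * e ≤ b * S.ℓ) : X.dil a ⊆ S.dil b := by
  intro y hy i
  have h1 : |y i - X.c i| ≤ a * X.ℓ / 2 := hy i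
  have h2 := he i
  have h3 := abs_sub_le (y i) (X.c i) (S.c i)
  show |y i - S.c i| ≤ b * S.ℓ / 2
  linarith

lemma set_subset_dil2 {X S : CubeOf μ} {b e : ℝ} (he : ∀ i, |X.c i - S.c i| ≤ e)
    (h : X.ℓ + 2 * e ≤ b * S.ℓ) : X.set ⊆ S.dil b := by
  rw [← dil_one X]; exact dil_subset_dil he (by linarith)

lemma set_subset_set {X S : CubeOf μ} {e : ℝ} (he : ∀ i, |X.c i - S.c i| ≤ e)
    (h : X.ℓ + 2 * e ≤ S.ℓ) : X.set ⊆ S.set := by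
  rw [← dil_one X, ← dil_one S]; exact dil_subset_dil he (by linarith)

lemma dil_mono (Q : CubeOf μ) {a b : ℝ} (h : a ≤ b) : Q.dil a ⊆ Q.dil b := by
  refine dil_subset_dil (S := Q) (e := 0) (fun i => by simp) ?_
  have := Q.ℓ_pos; nlinarith

lemma set_subset_dil (Q : CubeOf μ) {a : ℝ} (h : 1 ≤ a) : Q.set ⊆ Q.dil a := by
  rw [← dil_one Q]; exact dil_mono Q h

lemma pow2_c (Q : CubeOf μ) (k : ℕ) : (Q.pow2 k).c = Q.c := rfl
lemma pow2_l (Q : CubeOf μ) (k : ℕ) : (Q.pow2 k).ℓ = 2 ^ k * Q.ℓ := rfl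

lemma pow2_zero (Q : CubeOf μ) : Q.pow2 0 = Q :=
  cube_ext rfl (by rw [pow2_l, pow_zero, one_mul])

lemma pow2_pow2 (Q : CubeOf μ) (j k : ℕ) : (Q.pow2 j).pow2 k = Q.pow2 (j + k) := by
  refine cube_ext rfl ?_
  simp only [pow2_l, pow_add]; ring

lemma pow2_set (Q : CubeOf μ) (k : ℕ) : (Q.pow2 k).set = Q.dil (2 ^ k) := rfl

lemma pow2_set_mono (Q : CubeOf μ) {j k : ℕ} (h : j ≤ k) :
    (Q.pow2 j).set ⊆ (Q.pow2 k).set := by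
  refine set_subset_set (e := 0) (fun i => by simp [pow2_c]) ?_
  have h1 : (2:ℝ)^j ≤ 2^k := pow_le_pow_right₀ one_le_two h
  have := Q.ℓ_pos
  simp only [pow2_l]
  nlinarith

lemma dil_two_pow2 (Q : CubeOf μ) (N : ℕ) : (Q.pow2 N).dil 2 = (Q.pow2 (N+1)).set := by
  have h2 : (2:ℝ) * (2^N*Q.ℓ) / 2 = 2^(N+1)*Q.ℓ/2 := by rw [pow_succ]; ring
  ext y
  show (∀ i, |y i - Q.c i| ≤ 2 * (2^N*Q.ℓ) / 2) ↔ (∀ i, |y i - Q.c i| ≤ 2^(N+1)*Q.ℓ/2)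
  simp only [h2]

lemma dist_coord_le (y z : Euc d) (i : Fin d) : |y i - z i| ≤ dist y z := by
  rw [EuclideanSpace.dist_eq]
  rw [show |y i - z i| = Real.sqrt (dist (y i) (z i) ^ 2) by
    rw [Real.sqrt_sq_eq_abs, Real.dist_eq, abs_abs]]
  exact Real.sqrt_le_sqrt (Finset.single_le_sum (f := fun j => dist (y j) (z j) ^ 2)
    (fun j _ => sq_nonneg _) (Finset.mem_univ i))

lemma set_subset_ball (Q : CubeOf μ) : Q.set ⊆ Metric.ball Q.c ((Real.sqrt d + 1) * Q.ℓ) := by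
  intro y hy
  have hl := Q.ℓ_pos
  have h1 : dist y Q.c ≤ Real.sqrt d * (Q.ℓ/2) := by
    rw [EuclideanSpace.dist_eq]
    have h2 : ∀ j ∈ Finset.univ, dist (y j) (Q.c j) ^ 2 ≤ (Q.ℓ/2)^2 := by
      intro j _
      rw [Real.dist_eq]
      have := hy j
      nlinarith [abs_nonneg (y j - Q.c j)]
    calc Real.sqrt (∑ j, dist (y j) (Q.c j) ^ 2) ≤ Real.sqrt (d * (Q.ℓ/2)^2) := by
          apply Real.sqrt_le_sqrt
          calc ∑ j, dist (y j) (Q.c j)^2 ≤ ∑ _j : Fin d, (Q.ℓ/2)^2 := Finset.sum_le_sum h2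
            _ = d * (Q.ℓ/2)^2 := by
                rw [Finset.sum_const, Finset.card_univ, Fintype.card_fin, nsmul_eq_mul]
      _ = Real.sqrt d * (Q.ℓ/2) := by
          rw [Real.sqrt_mul (Nat.cast_nonneg d), Real.sqrt_sq (by positivity)]
  have hd0 : (0:ℝ) ≤ Real.sqrt d := Real.sqrt_nonneg d
  rw [Metric.mem_ball]
  nlinarith

/-- Constant of the growth of cubes: `μ Q ≤ cdC * ℓ^n`.-/
noncomputable def cdC (d n : ℕ) (C₀ : ℝ) : ℝ := C₀ * (Real.sqrt d + 1) ^ n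

lemma cdC_pos {n : ℕ} {C₀ : ℝ} (hC₀ : 0 < C₀) : 0 < cdC d n C₀ := by
  have : (0:ℝ) ≤ Real.sqrt d := Real.sqrt_nonneg d
  unfold cdC; positivity

variable {n : ℕ} {C₀ βd : ℝ}

lemma growth_set (hg : GrowthBound μ n C₀) (Q : CubeOf μ) :
    μ Q.set ≤ ENNReal.ofReal (cdC d n C₀ * Q.ℓ^n) := by
  have hl := Q.ℓ_pos
  have hd0 : (0:ℝ) ≤ Real.sqrt d := Real.sqrt_nonneg d
  refine le_trans (measure_mono (set_subset_ball Q)) (le_trans (hg _ _ (by positivity)) ?_)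
  rw [mul_pow]
  rw [show C₀ * ((Real.sqrt d + 1)^n * Q.ℓ^n) = cdC d n C₀ * Q.ℓ^n by rw [cdC]; ring]

/-- An auxiliary cube with the same center as `Q` and side `a * Q.ℓ`. -/
def scaleC (Q : CubeOf μ) (a : ℝ) (ha : 0 < a) : CubeOf μ :=
  ⟨Q.c, a * Q.ℓ, mul_pos ha Q.ℓ_pos, Q.c_mem⟩

lemma scaleC_set (Q : CubeOf μ) (a : ℝ) (ha : 0 < a) : (scaleC Q a ha).set = Q.dil a := rfl

lemma growth_dil (hg : GrowthBound μ n C₀) (Q : CubeOf μ) {a : ℝ} (ha : 0 < a) :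
    μ (Q.dil a) ≤ ENNReal.ofReal (cdC d n C₀ * (a*Q.ℓ)^n) := by
  rw [← scaleC_set Q a ha]; exact growth_set hg _

lemma ball_subset_set (Q : CubeOf μ) : Metric.ball Q.c (Q.ℓ/2) ⊆ Q.set := by
  intro y hy i
  exact le_of_lt (lt_of_le_of_lt (dist_coord_le y Q.c i) (Metric.mem_ball.mp hy))

lemma set_pos (Q : CubeOf μ) : 0 < μ Q.set :=
  lt_of_lt_of_le (Q.c_mem _ (by have := Q.ℓ_pos; positivity)) (measure_mono (ball_subset_set Q))

lemma set_ne_top (hg : GrowthBound μ n C₀) (Q : CubeOf μ) : μ Q.set ≠ ⊤ :=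
  ne_top_of_le_ne_top ENNReal.ofReal_ne_top (growth_set hg Q)

lemma dil_ne_top (hg : GrowthBound μ n C₀) (Q : CubeOf μ) {a : ℝ} (ha : 0 < a) :
    μ (Q.dil a) ≠ ⊤ :=
  ne_top_of_le_ne_top ENNReal.ofReal_ne_top (growth_dil hg Q ha)

lemma isClosed_set (Q : CubeOf μ) : IsClosed Q.set := by
  have h : Q.set = ⋂ i, (fun y : Euc d => y i) ⁻¹' {t | |t - Q.c i| ≤ Q.ℓ/2} := by
    ext y; simp [CubeOf.set, Set.mem_iInter]
  rw [h]
  refine isClosed_iInter fun i => IsClosed.preimage ?_ ?_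
  · exact (LipschitzWith.of_dist_le_mul (K := 1) fun y z => by
      rw [NNReal.coe_one, one_mul, Real.dist_eq]; exact dist_coord_le y z i).continuous
  · exact isClosed_le (continuous_abs.comp (continuous_id.sub continuous_const)) continuous_const

lemma isCompact_set (Q : CubeOf μ) : IsCompact Q.set :=
  Metric.isCompact_of_isClosed_isBounded (isClosed_set Q)
    (Metric.isBounded_ball.subset (set_subset_ball Q))

lemma measurableSet_set (Q : CubeOf μ) : MeasurableSet Q.set := (isClosed_set Q).measurableSet

lemma integrableOn_set {f : Euc d → ℝ} (hf : MeasureTheory.LocallyIntegrable f μ)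
    (Q : CubeOf μ) : MeasureTheory.IntegrableOn f Q.set μ :=
  hf.integrableOn_isCompact (isCompact_set Q)

lemma sub_len (hd : 0 < d) {P D : CubeOf μ} (h : P.set ⊆ D.set) : P.ℓ ≤ D.ℓ := by
  classical
  set i₀ : Fin d := ⟨0, hd⟩
  set z₁ : Euc d := WithLp.toLp 2 (Function.update P.c i₀ (P.c i₀ + P.ℓ/2)) with hz₁
  set z₂ : Euc d := WithLp.toLp 2 (Function.update P.c i₀ (P.c i₀ - P.ℓ/2)) with hz₂
  have hl := P.ℓ_pos
  have hz₁m : z₁ ∈ P.set := by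
    intro i
    by_cases hi : i = i₀
    · subst hi
      rw [hz₁, PiLp.toLp_apply, Function.update_self]
      rw [show P.c i₀ + P.ℓ/2 - P.c i₀ = P.ℓ/2 by ring, abs_of_nonneg (by linarith)]
    · rw [hz₁, PiLp.toLp_apply, Function.update_of_ne hi]
      simp only [sub_self, abs_zero]; linarith
  have hz₂m : z₂ ∈ P.set := by
    intro i
    by_cases hi : i = i₀
    · subst hi
      rw [hz₂, PiLp.toLp_apply, Function.update_self]
      rw [show P.c i₀ - P.ℓ/2 - P.c i₀ = -(P.ℓ/2) by ring, abs_neg,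
        abs_of_nonneg (by linarith)]
    · rw [hz₂, PiLp.toLp_apply, Function.update_of_ne hi]
      simp only [sub_self, abs_zero]; linarith
  have h1 := h hz₁m i₀
  have h2 := h hz₂m i₀
  rw [hz₁, PiLp.toLp_apply, Function.update_self] at h1
  rw [hz₂, PiLp.toLp_apply, Function.update_self] at h2
  rw [abs_le] at h1 h2
  linarith [h1.1, h1.2, h2.1, h2.2]

end Tolsa28
namespace Tolsa28

variable {d : ℕ} {μ : MeasureTheory.Measure (Euc d)} {n : ℕ} {C₀ βd : ℝ}

open MeasureTheory Metric Set
open scoped ENNReal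

/-! ### NQR facts -/

lemma NQR_nonempty (Q R : CubeOf μ) : {k : ℕ | 1 ≤ k ∧ R.ℓ ≤ 2 ^ k * Q.ℓ}.Nonempty := by
  obtain ⟨N, hN⟩ := pow_unbounded_of_one_lt (R.ℓ / Q.ℓ) (one_lt_two (α := ℝ))
  refine ⟨N + 1, Nat.le_add_left 1 N, ?_⟩
  have hq := Q.ℓ_pos
  rw [div_lt_iff₀ hq] at hN
  have h2 : (2:ℝ)^N ≤ 2^(N+1) := by
    rw [pow_succ]; nlinarith [pow_pos (zero_lt_two (α := ℝ)) N]
  nlinarith [pow_pos (zero_lt_two (α := ℝ)) N]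

lemma NQR_one_le (Q R : CubeOf μ) : 1 ≤ NQR Q R := (Nat.sInf_mem (NQR_nonempty Q R)).1

lemma NQR_spec (Q R : CubeOf μ) : R.ℓ ≤ 2 ^ NQR Q R * Q.ℓ := (Nat.sInf_mem (NQR_nonempty Q R)).2

lemma NQR_le {Q R : CubeOf μ} {m : ℕ} (hm : 1 ≤ m) (h : R.ℓ ≤ 2 ^ m * Q.ℓ) : NQR Q R ≤ m :=
  Nat.sInf_le ⟨hm, h⟩

lemma NQR_min {Q R : CubeOf μ} {k : ℕ} (h1 : 1 ≤ k) (h2 : k < NQR Q R) :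
    2 ^ k * Q.ℓ < R.ℓ := by
  have h := Nat.notMem_of_lt_sInf h2
  simp only [Set.mem_setOf_eq, not_and, not_le] at h
  exact h h1

lemma NQR_mono (Q : CubeOf μ) {R R' : CubeOf μ} (h : R.ℓ ≤ R'.ℓ) : NQR Q R ≤ NQR Q R' :=
  NQR_le (NQR_one_le Q R') (h.trans (NQR_spec Q R'))

/-! ### Doubling and tilde -/

lemma step_nondoubling (hβ0 : 0 ≤ βd) (hg : GrowthBound μ n C₀)
    {Q : CubeOf μ} {N : ℕ} (h : ¬ IsDoubling μ 2 βd (Q.pow2 N)) :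
    βd * (μ (Q.pow2 N).set).toReal ≤ (μ (Q.pow2 (N+1)).set).toReal := by
  rw [IsDoubling, not_le, dil_two_pow2] at h
  have h2 := ENNReal.toReal_mono (set_ne_top hg _) (le_of_lt h)
  rwa [ENNReal.toReal_mul, ENNReal.toReal_ofReal hβ0] at h2

lemma two_pow_n_pos : (0:ℝ) < 2^n := by positivity

lemma βd_pos (hβ : (2:ℝ)^n < βd) : 0 < βd := lt_trans two_pow_n_pos hβ

lemma tilde_exists (hC₀ : 0 < C₀) (hβ : (2:ℝ)^n < βd) (hg : GrowthBound μ n C₀)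
    (Q : CubeOf μ) : {N : ℕ | IsDoubling μ 2 βd (Q.pow2 N)}.Nonempty := by
  by_contra hne
  rw [Set.not_nonempty_iff_eq_empty] at hne
  have hnd : ∀ N, ¬ IsDoubling μ 2 βd (Q.pow2 N) := fun N hN =>
    (Set.eq_empty_iff_forall_notMem.mp hne N) hN
  have hβ0 : (0:ℝ) < βd := βd_pos hβ
  have hstep : ∀ N, βd * (μ (Q.pow2 N).set).toReal ≤ (μ (Q.pow2 (N+1)).set).toReal :=
    fun N => step_nondoubling hβ0.le hg (hnd N)
  have hlow : ∀ N, βd ^ N * (μ Q.set).toReal ≤ (μ (Q.pow2 N).set).toReal := by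
    intro N
    induction N with
    | zero => rw [pow2_zero]; simp
    | succ k ih =>
      calc βd^(k+1) * (μ Q.set).toReal = βd * (βd^k * (μ Q.set).toReal) := by ring
        _ ≤ βd * (μ (Q.pow2 k).set).toReal := by nlinarith
        _ ≤ _ := hstep k
  have hup : ∀ N, (μ (Q.pow2 N).set).toReal ≤ cdC d n C₀ * Q.ℓ^n * (2^n)^N := by
    intro N
    have h1 := ENNReal.toReal_le_of_le_ofReal
      (mul_nonneg (cdC_pos (d := d) (n := n) hC₀).le (pow_nonneg (Q.pow2 N).ℓ_pos.le n))
      (growth_set hg (Q.pow2 N))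
    calc (μ (Q.pow2 N).set).toReal ≤ cdC d n C₀ * ((2:ℝ)^N*Q.ℓ)^n := by
          rw [← pow2_l]; exact h1
      _ = cdC d n C₀ * Q.ℓ^n * (2^n)^N := by
          rw [mul_pow, ← pow_mul, ← pow_mul, Nat.mul_comm]; ring
  have hm0 : 0 < (μ Q.set).toReal :=
    ENNReal.toReal_pos (ne_of_gt (set_pos _)) (set_ne_top hg _)
  obtain ⟨N, hN⟩ := pow_unbounded_of_one_lt
    (cdC d n C₀ * Q.ℓ^n / (μ Q.set).toReal) ((one_lt_div two_pow_n_pos).mpr hβ)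
  have h3 := (hlow N).trans (hup N)
  rw [div_pow, div_lt_div_iff₀ hm0 (by positivity)] at hN
  nlinarith

lemma tilde_doubling (hC₀ : 0 < C₀) (hβ : (2:ℝ)^n < βd) (hg : GrowthBound μ n C₀)
    (Q : CubeOf μ) : IsDoubling μ 2 βd (Q.tilde βd) :=
  Nat.sInf_mem (tilde_exists hC₀ hβ hg Q)

lemma tildeIdx_le {Q : CubeOf μ} {m : ℕ} (h : IsDoubling μ 2 βd (Q.pow2 m)) :
    tildeIdx μ βd Q ≤ m := Nat.sInf_le h

lemma tildeIdx_min {Q : CubeOf μ} {j : ℕ} (h : j < tildeIdx μ βd Q) :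
    ¬ IsDoubling μ 2 βd (Q.pow2 j) := Nat.notMem_of_lt_sInf h

lemma tilde_def (Q : CubeOf μ) (βd : ℝ) : Q.tilde βd = Q.pow2 (tildeIdx μ βd Q) := rfl

lemma tilde_c (Q : CubeOf μ) (βd : ℝ) : (Q.tilde βd).c = Q.c := rfl

lemma tilde_l (Q : CubeOf μ) (βd : ℝ) : (Q.tilde βd).ℓ = 2 ^ (tildeIdx μ βd Q) * Q.ℓ := rfl

lemma le_tilde_l (Q : CubeOf μ) (βd : ℝ) : Q.ℓ ≤ (Q.tilde βd).ℓ := by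
  rw [tilde_l]
  have h1 : (1:ℝ) ≤ 2 ^ (tildeIdx μ βd Q) := one_le_pow₀ one_le_two
  nlinarith [Q.ℓ_pos]

lemma subset_tilde (βd : ℝ) (Q : CubeOf μ) : Q.set ⊆ (Q.tilde βd).set := by
  have h := pow2_set_mono Q (Nat.zero_le (tildeIdx μ βd Q))
  rwa [pow2_zero] at h

lemma pow2_one_set (Q : CubeOf μ) : (Q.pow2 1).set = Q.dil 2 := by
  rw [pow2_set, pow_one]

lemma doubling_measure {Q : CubeOf μ} (h : IsDoubling μ 2 βd Q) :
    μ ((Q.pow2 1).set) ≤ ENNReal.ofReal βd * μ Q.set := by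
  rw [pow2_one_set]; exact h

/-! ### The chain of non-doubling cubes -/

lemma chain_le (hβ : (2:ℝ)^n < βd) (hg : GrowthBound μ n C₀) (Q : CubeOf μ) (j : ℕ) :
    ∀ k : ℕ, j + k ≤ tildeIdx μ βd Q →
      βd ^ k * (μ (Q.pow2 j).set).toReal ≤ (μ (Q.pow2 (j+k)).set).toReal := by
  intro k
  induction k with
  | zero => intro _; simp
  | succ i ih =>
    intro hik
    have hβ0 := βd_pos hβ
    have h1 := ih (by omega)
    have h2 := step_nondoubling hβ0.le hg (tildeIdx_min (show j + i < tildeIdx μ βd Q by omega))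
    calc βd^(i+1) * (μ (Q.pow2 j).set).toReal = βd * (βd^i * (μ (Q.pow2 j).set).toReal) := by
          ring
      _ ≤ βd * (μ (Q.pow2 (j+i)).set).toReal := by nlinarith
      _ ≤ (μ (Q.pow2 (j+i+1)).set).toReal := h2
      _ = (μ (Q.pow2 (j+(i+1))).set).toReal := by rw [show j+i+1 = j+(i+1) by omega]

/-- The ratio in the geometric decay. -/
noncomputable def rK (n : ℕ) (βd : ℝ) : ℝ := 2^n / βd

lemma rK_nonneg (hβ : (2:ℝ)^n < βd) : 0 ≤ rK n βd := by
  have := βd_pos hβ; unfold rK; positivity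

lemma rK_lt_one (hβ : (2:ℝ)^n < βd) : rK n βd < 1 := (div_lt_one (βd_pos hβ)).mpr hβ

lemma term_chain (hC₀ : 0 < C₀) (hβ : (2:ℝ)^n < βd) (hg : GrowthBound μ n C₀)
    (Q : CubeOf μ) {j : ℕ} (hj : j ≤ tildeIdx μ βd Q) :
    (μ (Q.pow2 j).set).toReal / ((2:ℝ)^j*Q.ℓ)^n ≤
      cdC d n C₀ * (rK n βd) ^ (tildeIdx μ βd Q - j) := by
  set t := tildeIdx μ βd Q with ht
  have hβ0 := βd_pos hβ
  have hl := Q.ℓ_pos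
  have hcd := cdC_pos (d := d) (n := n) hC₀
  have h1 : βd^(t-j) * (μ (Q.pow2 j).set).toReal ≤ (μ (Q.pow2 t).set).toReal := by
    have := chain_le hβ hg Q j (t-j) (by omega)
    rwa [show j + (t-j) = t by omega] at this
  have h2 : (μ (Q.pow2 t).set).toReal ≤ cdC d n C₀ * ((2:ℝ)^t*Q.ℓ)^n := by
    have := ENNReal.toReal_le_of_le_ofReal
      (mul_nonneg hcd.le (pow_nonneg (Q.pow2 t).ℓ_pos.le n)) (growth_set hg (Q.pow2 t))
    rwa [pow2_l] at this
  have key : ((2:ℝ)^t*Q.ℓ)^n = ((2:ℝ)^n)^(t-j) * ((2:ℝ)^j*Q.ℓ)^n := by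
    rw [show (2:ℝ)^t = 2^(t-j) * 2^j by rw [← pow_add]; congr 1; omega]
    rw [mul_assoc, mul_pow, ← pow_mul, ← pow_mul, Nat.mul_comm]
  have hm : (μ (Q.pow2 j).set).toReal ≤
      cdC d n C₀ * ((2:ℝ)^n)^(t-j) / βd^(t-j) * ((2:ℝ)^j*Q.ℓ)^n := by
    rw [div_mul_eq_mul_div, le_div_iff₀ (by positivity)]
    calc (μ (Q.pow2 j).set).toReal * βd^(t-j) = βd^(t-j) * (μ (Q.pow2 j).set).toReal := by ring
      _ ≤ (μ (Q.pow2 t).set).toReal := h1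
      _ ≤ cdC d n C₀ * ((2:ℝ)^t*Q.ℓ)^n := h2
      _ = cdC d n C₀ * ((2:ℝ)^n)^(t-j) * ((2:ℝ)^j*Q.ℓ)^n := by rw [key]; ring
  rw [div_le_iff₀ (by positivity)]
  calc (μ (Q.pow2 j).set).toReal ≤
      cdC d n C₀ * ((2:ℝ)^n)^(t-j) / βd^(t-j) * ((2:ℝ)^j*Q.ℓ)^n := hm
    _ = cdC d n C₀ * (rK n βd)^(t-j) * ((2:ℝ)^j*Q.ℓ)^n := by
        rw [rK, div_pow]; ring

lemma term_le (hC₀ : 0 < C₀) (hg : GrowthBound μ n C₀) (Q : CubeOf μ) (k : ℕ) :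
    (μ (Q.pow2 k).set).toReal / ((2:ℝ)^k*Q.ℓ)^n ≤ cdC d n C₀ := by
  have hl := Q.ℓ_pos
  rw [div_le_iff₀ (pow_pos (mul_pos (pow_pos two_pos k) hl) n)]
  have h1 := ENNReal.toReal_le_of_le_ofReal
    (mul_nonneg (cdC_pos (d := d) (n := n) hC₀).le (pow_nonneg (Q.pow2 k).ℓ_pos.le n))
    (growth_set hg (Q.pow2 k))
  rwa [pow2_l] at h1

lemma term_nonneg (Q : CubeOf μ) (k : ℕ) :
    0 ≤ (μ (Q.pow2 k).set).toReal / ((2:ℝ)^k*Q.ℓ)^n :=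
  div_nonneg ENNReal.toReal_nonneg (pow_nonneg (mul_nonneg (pow_nonneg zero_le_two k) Q.ℓ_pos.le) n)

lemma one_le_Kcoef (Q R : CubeOf μ) : 1 ≤ Kcoef n Q R :=
  le_add_of_nonneg_right (Finset.sum_nonneg fun k _ => term_nonneg Q k)

lemma Kcoef_nonneg (Q R : CubeOf μ) : 0 ≤ Kcoef n Q R :=
  zero_le_one.trans (one_le_Kcoef Q R)

lemma Kcoef_le (hC₀ : 0 < C₀) (hg : GrowthBound μ n C₀) (Q R : CubeOf μ) {m : ℕ}
    (h : NQR Q R ≤ m) : Kcoef n Q R ≤ 1 + m * cdC d n C₀ := by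
  unfold Kcoef
  have h1 : ∑ k ∈ Finset.Icc 1 (NQR Q R), (μ ((Q.pow2 k).set)).toReal / ((2:ℝ)^k * Q.ℓ)^n ≤
      ∑ _k ∈ Finset.Icc 1 (NQR Q R), cdC d n C₀ :=
    Finset.sum_le_sum fun k _ => term_le hC₀ hg Q k
  have h2 : ∑ _k ∈ Finset.Icc 1 (NQR Q R), cdC d n C₀ = (NQR Q R) * cdC d n C₀ := by
    rw [Finset.sum_const, Nat.card_Icc, nsmul_eq_mul]
    norm_num
  have h3 : (NQR Q R : ℝ) * cdC d n C₀ ≤ m * cdC d n C₀ := by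
    have := cdC_pos (d := d) (n := n) hC₀
    have h4 : (NQR Q R : ℝ) ≤ m := by exact_mod_cast h
    nlinarith
  linarith

end Tolsa28
namespace Tolsa28

variable {d : ℕ} {μ : MeasureTheory.Measure (Euc d)} {n : ℕ} {C₀ βd : ℝ}

open MeasureTheory Metric Set
open scoped ENNReal

lemma geom_partial_le {r : ℝ} (hr0 : 0 ≤ r) (hr1 : r < 1) (m : ℕ) :
    ∑ i ∈ Finset.range m, r ^ i ≤ 1 / (1 - r) := by
  have h1 : (0:ℝ) < 1 - r := by linarith
  have hne : r ≠ 1 := by linarith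
  have h2 : (∑ i ∈ Finset.range m, r ^ i) = (1 - r^m)/(1 - r) := by
    rw [geom_sum_eq hne]
    rw [div_eq_div_iff (sub_ne_zero.mpr hne) (by linarith : (1:ℝ) - r ≠ 0)]
    ring
  rw [h2]
  have h3 : (0:ℝ) ≤ r^m := pow_nonneg hr0 m
  rw [div_le_div_iff₀ h1 h1]
  nlinarith

lemma sum_pow_le {r : ℝ} (hr0 : 0 ≤ r) (hr1 : r < 1) (a b m : ℕ) (ha : 1 ≤ a) :
    ∑ k ∈ Finset.Icc a b, r ^ (m - k) ≤ 1/(1-r) + ((b+1-m : ℕ) : ℝ) := by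
  classical
  rw [← Finset.sum_filter_add_sum_filter_not (Finset.Icc a b) (fun k => k < m)]
  have h1 : ∑ k ∈ (Finset.Icc a b).filter (fun k => k < m), r^(m-k) ≤ 1/(1-r) := by
    have himg : ∑ i ∈ ((Finset.Icc a b).filter (fun k => k < m)).image (fun k => m - k),
        r ^ i = ∑ k ∈ (Finset.Icc a b).filter (fun k => k < m), r^(m-k) :=
      Finset.sum_image (fun x hx y hy hxy => by
        simp only [Finset.mem_coe, Finset.mem_filter, Finset.mem_Icc] at hx hy; omega)
    rw [← himg]
    refine (Finset.sum_le_sum_of_subset_of_nonneg ?_ ?_).trans (geom_partial_le hr0 hr1 m)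
    · intro j hj
      simp only [Finset.mem_image, Finset.mem_filter, Finset.mem_Icc] at hj
      obtain ⟨k, ⟨hka, hk⟩, rfl⟩ := hj
      simp only [Finset.mem_range]; omega
    · intro j _ _; exact pow_nonneg hr0 j
  have h2 : ∑ k ∈ (Finset.Icc a b).filter (fun k => ¬ k < m), r^(m-k) ≤ ((b+1-m : ℕ) : ℝ) := by
    have he : ∀ k ∈ (Finset.Icc a b).filter (fun k => ¬ k < m), r^(m-k) = 1 := by
      intro k hk
      simp only [Finset.mem_filter, Finset.mem_Icc, not_lt] at hk
      rw [show m - k = 0 by omega, pow_zero]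
    rw [Finset.sum_congr rfl he, Finset.sum_const, nsmul_eq_mul, mul_one]
    have hsub : (Finset.Icc a b).filter (fun k => ¬ k < m) ⊆ Finset.Icc m b := by
      intro k hk; simp only [Finset.mem_filter, Finset.mem_Icc, not_lt] at hk
      simp only [Finset.mem_Icc]; omega
    have h3 := (Finset.card_le_card hsub).trans_eq (Nat.card_Icc m b)
    exact_mod_cast Nat.cast_le.mpr h3
  linarith

/-- The key per-scale estimate: a cube `2^k X` contained (via the geometry) in the
non-doubling chain of `S` has small measure density. -/
lemma per_term (hC₀ : 0 < C₀) (hβ : (2:ℝ)^n < βd) (hg : GrowthBound μ n C₀)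
    (S X : CubeOf μ) (hcX : X.c ∈ S.set) {a : ℝ} {c : ℕ} (ha : 1 ≤ a)
    (hac : 2*(1+a) ≤ 2^c) {k : ℕ} (hk : 1 ≤ k) (hl : S.ℓ ≤ a * (2^k * X.ℓ)) :
    (μ ((X.pow2 k).set)).toReal / ((2:ℝ)^k*X.ℓ)^n ≤
      (2*(1+a))^n * cdC d n C₀ * (rK n βd) ^ (NQR X (S.tilde βd) - (k+c)) := by
  have hβ0 := βd_pos hβ
  have hr0 := rK_nonneg hβ
  have hr1 := rK_lt_one hβ
  have hlX := X.ℓ_pos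
  have hlS := S.ℓ_pos
  have hcd := cdC_pos (d := d) (n := n) hC₀
  have h2k : (0:ℝ) < 2^k := by positivity
  have hkx : (0:ℝ) < 2^k * X.ℓ := mul_pos h2k hlX
  have ha0 : (0:ℝ) < 2*(1+a) := by linarith
  have h2a : (1:ℝ) ≤ (2*(1+a))^n := one_le_pow₀ (by linarith)
  set t := tildeIdx μ βd S with htdef
  set N' := NQR X (S.tilde βd) with hN'def
  have hc2 : 2 ≤ c := by
    by_contra hcc
    push_neg at hcc
    interval_cases c <;> norm_num at hac <;> nlinarith
  have hJne : {j : ℕ | 2^k * X.ℓ + S.ℓ ≤ 2^j * S.ℓ}.Nonempty := by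
    obtain ⟨j, hj⟩ := pow_unbounded_of_one_lt ((2^k*X.ℓ + S.ℓ)/S.ℓ) (one_lt_two (α := ℝ))
    rw [div_lt_iff₀ hlS] at hj
    exact ⟨j, by simp only [Set.mem_setOf_eq]; nlinarith⟩
  set j := sInf {j : ℕ | 2^k * X.ℓ + S.ℓ ≤ 2^j * S.ℓ} with hjdef
  have hjmem : 2^k*X.ℓ + S.ℓ ≤ 2^j*S.ℓ := Nat.sInf_mem hJne
  have hj1 : 1 ≤ j := by
    by_contra hj0
    push_neg at hj0
    have hj0' : j = 0 := by omega
    rw [hj0', pow_zero, one_mul] at hjmem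
    nlinarith
  have hjmin : (2:ℝ)^(j-1)*S.ℓ < 2^k*X.ℓ + S.ℓ := by
    have h : j - 1 ∉ {j : ℕ | 2^k * X.ℓ + S.ℓ ≤ 2^j * S.ℓ} := by
      rw [hjdef]; exact Nat.notMem_of_lt_sInf (by rw [← hjdef]; omega)
    simp only [Set.mem_setOf_eq, not_le] at h
    exact h
  have hjub : (2:ℝ)^j * S.ℓ ≤ 2*(1+a)*(2^k*X.ℓ) := by
    rw [show (2:ℝ)^j = 2*2^(j-1) by rw [← pow_succ']; congr 1; omega]
    nlinarith
  have hemb : (X.pow2 k).set ⊆ (S.pow2 j).set := by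
    rw [pow2_set, pow2_set]
    exact dil_subset_dil (fun i => hcX i) (by linarith)
  have hterm : (μ (X.pow2 k).set).toReal ≤ (μ (S.pow2 j).set).toReal :=
    ENNReal.toReal_mono (set_ne_top hg _) (measure_mono hemb)
  have hXden : (0:ℝ) < ((2:ℝ)^k*X.ℓ)^n := pow_pos hkx n
  by_cases hjt : j ≤ t
  · -- geometric regime
    have hch := term_chain hC₀ hβ hg S (j := j) (htdef ▸ hjt)
    rw [← htdef] at hch
    have hexp : N' - (k+c) ≤ t - j := by
      rcases Nat.eq_zero_or_pos (N' - (k+c)) with h0 | hpos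
      · omega
      · have hN2 : k + c + 1 ≤ N' := by omega
        have hmin := NQR_min (Q := X) (R := S.tilde βd) (k := N'-1)
          (by omega) (by rw [← hN'def]; omega)
        rw [tilde_l, ← htdef] at hmin
        have hSX : (2:ℝ)^j * S.ℓ ≤ 2^c * (2^k * X.ℓ) :=
          le_trans hjub (mul_le_mul_of_nonneg_right hac hkx.le)
        have h5 : (2:ℝ)^(j+(N'-1)) * X.ℓ < 2^(t+(k+c)) * X.ℓ := by
          calc (2:ℝ)^(j+(N'-1)) * X.ℓ = 2^j * (2^(N'-1) * X.ℓ) := by rw [pow_add]; ring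
            _ < 2^j * (2^t * S.ℓ) := by
                exact mul_lt_mul_of_pos_left hmin (pow_pos zero_lt_two j)
            _ = 2^t * (2^j * S.ℓ) := by ring
            _ ≤ 2^t * (2^c * (2^k * X.ℓ)) := by
                exact mul_le_mul_of_nonneg_left hSX (pow_nonneg zero_le_two t)
            _ = 2^(t+(k+c)) * X.ℓ := by rw [pow_add, pow_add]; ring
        have h6 : j + (N'-1) < t + (k+c) :=
          (pow_lt_pow_iff_right₀ one_lt_two).mp (lt_of_mul_lt_mul_right h5 hlX.le)
        omega
    have hrr : (rK n βd)^(t-j) ≤ (rK n βd)^(N'-(k+c)) :=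
      pow_le_pow_of_le_one hr0 hr1.le hexp
    have h7 : (μ (S.pow2 j).set).toReal ≤ cdC d n C₀ * (rK n βd)^(t-j) * ((2:ℝ)^j*S.ℓ)^n := by
      rw [div_le_iff₀ (pow_pos (mul_pos (pow_pos zero_lt_two j) hlS) n)] at hch
      exact hch
    have h8 : ((2:ℝ)^j*S.ℓ)^n ≤ (2*(1+a))^n * ((2:ℝ)^k*X.ℓ)^n := by
      rw [← mul_pow]
      exact pow_le_pow_left₀ (by positivity) (by nlinarith) n
    rw [div_le_iff₀ hXden]
    have hrpow : (0:ℝ) ≤ (rK n βd)^(t-j) := pow_nonneg hr0 _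
    have hrpow2 : (0:ℝ) ≤ (rK n βd)^(N'-(k+c)) := pow_nonneg hr0 _
    calc (μ (X.pow2 k).set).toReal ≤ (μ (S.pow2 j).set).toReal := hterm
      _ ≤ cdC d n C₀ * (rK n βd)^(t-j) * ((2:ℝ)^j*S.ℓ)^n := h7
      _ ≤ cdC d n C₀ * (rK n βd)^(t-j) * ((2*(1+a))^n * ((2:ℝ)^k*X.ℓ)^n) :=
          mul_le_mul_of_nonneg_left h8 (mul_nonneg hcd.le hrpow)
      _ = (2*(1+a))^n * cdC d n C₀ * ((rK n βd)^(t-j) * ((2:ℝ)^k*X.ℓ)^n) := by ring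
      _ ≤ (2*(1+a))^n * cdC d n C₀ * ((rK n βd)^(N'-(k+c)) * ((2:ℝ)^k*X.ℓ)^n) := by
          refine mul_le_mul_of_nonneg_left ?_ (mul_nonneg (pow_nonneg ha0.le n) hcd.le)
          exact mul_le_mul_of_nonneg_right hrr hXden.le
      _ = (2*(1+a))^n * cdC d n C₀ * (rK n βd)^(N'-(k+c)) * ((2:ℝ)^k*X.ℓ)^n := by ring
  · -- j > t : exponent is zero
    push_neg at hjt
    have hN0 : N' - (k+c) = 0 := by
      by_contra h0
      have hN2 : k + c + 1 ≤ N' := by omega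
      have hmin := NQR_min (Q := X) (R := S.tilde βd) (k := N'-1)
        (by omega) (by rw [← hN'def]; omega)
      rw [tilde_l, ← htdef] at hmin
      have h1a : (1:ℝ)+a ≤ 2^(c-1) := by
        have h2c : (2:ℝ)^c = 2*2^(c-1) := by rw [← pow_succ']; congr 1; omega
        rw [h2c] at hac; linarith
      have h4 : (2:ℝ)^t*S.ℓ ≤ 2^(j-1)*S.ℓ :=
        mul_le_mul_of_nonneg_right (pow_le_pow_right₀ one_le_two (by omega)) hlS.le
      have h5 : (2:ℝ)^(N'-1) * X.ℓ < 2^(k+(c-1))*X.ℓ := by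
        calc (2:ℝ)^(N'-1) * X.ℓ < 2^t * S.ℓ := hmin
          _ ≤ 2^(j-1)*S.ℓ := h4
          _ < 2^k*X.ℓ + S.ℓ := hjmin
          _ ≤ 2^k*X.ℓ + a*(2^k*X.ℓ) := by linarith
          _ = (1+a) * (2^k * X.ℓ) := by ring
          _ ≤ 2^(c-1) * (2^k*X.ℓ) := mul_le_mul_of_nonneg_right h1a hkx.le
          _ = 2^(k+(c-1))*X.ℓ := by rw [pow_add]; ring
      have h6 : N'-1 < k+(c-1) :=
        (pow_lt_pow_iff_right₀ one_lt_two).mp (lt_of_mul_lt_mul_right h5 hlX.le)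
      omega
    rw [hN0, pow_zero, mul_one]
    calc (μ (X.pow2 k).set).toReal / ((2:ℝ)^k*X.ℓ)^n ≤ cdC d n C₀ := term_le hC₀ hg X k
      _ ≤ (2*(1+a))^n * cdC d n C₀ := le_mul_of_one_le_left hcd.le h2a

end Tolsa28
namespace Tolsa28

variable {d : ℕ} {μ : MeasureTheory.Measure (Euc d)} {n : ℕ} {C₀ βd : ℝ}

open MeasureTheory Metric Set
open scoped ENNReal

lemma Icc_eq_Ioc (m : ℕ) : Finset.Icc 1 m = Finset.Ioc 0 m := by
  ext x; simp only [Finset.mem_Icc, Finset.mem_Ioc]; omega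

/-- Bound on `K_{X, S̃}` when `X` is at least comparable in size to `S` and centered
inside `S`. -/
lemma K_tilde_le (hC₀ : 0 < C₀) (hβ : (2:ℝ)^n < βd) (hg : GrowthBound μ n C₀)
    (S X : CubeOf μ) (hcX : X.c ∈ S.set) {a : ℝ} {c : ℕ} (ha : 1 ≤ a)
    (hac : 2*(1+a) ≤ 2^c) (hl : S.ℓ ≤ a * X.ℓ) :
    Kcoef n X (S.tilde βd) ≤ 1 + (2*(1+a))^n * cdC d n C₀ * (1/(1-rK n βd) + (c+1)) := by
  have hr0 := rK_nonneg hβ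
  have hr1 := rK_lt_one hβ
  have hcd := cdC_pos (d := d) (n := n) hC₀
  have ha0 : (0:ℝ) ≤ (2*(1+a))^n := pow_nonneg (by linarith) n
  have haM : (0:ℝ) ≤ (2*(1+a))^n * cdC d n C₀ := mul_nonneg ha0 hcd.le
  unfold Kcoef
  set N' := NQR X (S.tilde βd) with hN'
  have h1 : ∀ k ∈ Finset.Icc 1 N', (μ ((X.pow2 k).set)).toReal / ((2:ℝ)^k * X.ℓ)^n ≤
      (2*(1+a))^n * cdC d n C₀ * (rK n βd) ^ ((N'-c) - k) := by
    intro k hk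
    rw [Finset.mem_Icc] at hk
    have h2k1 : (1:ℝ) ≤ 2 ^ k := one_le_pow₀ one_le_two
    have hp := per_term hC₀ hβ hg S X hcX ha hac hk.1
      (le_trans hl (mul_le_mul_of_nonneg_left
        (by nlinarith [mul_nonneg (by linarith : (0:ℝ) ≤ 2^k - 1) X.ℓ_pos.le] :
          X.ℓ ≤ 2^k * X.ℓ) (by linarith : (0:ℝ) ≤ a)))
    rw [← hN', show N' - (k+c) = (N'-c)-k by omega] at hp
    exact hp
  have h2 := Finset.sum_le_sum h1
  have h3 : ∑ k ∈ Finset.Icc 1 N', (2*(1+a))^n * cdC d n C₀ * (rK n βd) ^ ((N'-c) - k)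
      = (2*(1+a))^n * cdC d n C₀ * ∑ k ∈ Finset.Icc 1 N', (rK n βd) ^ ((N'-c) - k) := by
    rw [Finset.mul_sum]
  have h4 := sum_pow_le hr0 hr1 1 N' (N'-c) le_rfl
  have h5 : ((N'+1-(N'-c) : ℕ) : ℝ) ≤ (c:ℝ)+1 := by
    exact_mod_cast Nat.cast_le.mpr (show N'+1-(N'-c) ≤ c+1 by omega)
  have h6 : ∑ k ∈ Finset.Icc 1 N', (rK n βd) ^ ((N'-c) - k) ≤ 1/(1-rK n βd) + ((c:ℝ)+1) :=
    h4.trans (by linarith)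
  have h7 : (2*(1+a))^n * cdC d n C₀ * ∑ k ∈ Finset.Icc 1 N', (rK n βd) ^ ((N'-c) - k)
      ≤ (2*(1+a))^n * cdC d n C₀ * (1/(1-rK n βd) + ((c:ℝ)+1)) :=
    mul_le_mul_of_nonneg_left h6 haM
  push_cast
  linarith [h2, h3 ▸ h2]

/-- `K_{Q, R̃} ≤ K_{Q,R} + A` when `Q ⊆ R`. -/
lemma K_tilde_add (hC₀ : 0 < C₀) (hβ : (2:ℝ)^n < βd) (hg : GrowthBound μ n C₀)
    (Q R : CubeOf μ) (hQR : Q.set ⊆ R.set) :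
    Kcoef n Q (R.tilde βd) ≤ Kcoef n Q R + 4^n * cdC d n C₀ * (1/(1-rK n βd) + 3) := by
  have hc : Q.c ∈ R.set := hQR (c_mem_set Q)
  have hr0 := rK_nonneg hβ
  have hr1 := rK_lt_one hβ
  have hcd := cdC_pos (d := d) (n := n) hC₀
  have h4n : (0:ℝ) ≤ 4^n * cdC d n C₀ :=
    mul_nonneg (pow_nonneg (by norm_num) n) hcd.le
  unfold Kcoef
  set N := NQR Q R with hN
  set N' := NQR Q (R.tilde βd) with hN'2
  have hNN' : N ≤ N' := NQR_mono Q (le_tilde_l R βd)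
  have hsplit : ∑ k ∈ Finset.Ioc 0 N,
        (μ ((Q.pow2 k).set)).toReal / ((2:ℝ)^k * Q.ℓ)^n
      + ∑ k ∈ Finset.Ioc N N', (μ ((Q.pow2 k).set)).toReal / ((2:ℝ)^k * Q.ℓ)^n
      = ∑ k ∈ Finset.Ioc 0 N', (μ ((Q.pow2 k).set)).toReal / ((2:ℝ)^k * Q.ℓ)^n :=
    Finset.sum_Ioc_consecutive _ (Nat.zero_le N) hNN'
  have htail : ∑ k ∈ Finset.Ioc N N', (μ ((Q.pow2 k).set)).toReal / ((2:ℝ)^k * Q.ℓ)^n ≤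
      4^n * cdC d n C₀ * (1/(1-rK n βd) + 3) := by
    have h1 : ∀ k ∈ Finset.Ioc N N', (μ ((Q.pow2 k).set)).toReal / ((2:ℝ)^k * Q.ℓ)^n ≤
        4^n * cdC d n C₀ * (rK n βd) ^ ((N'-2) - k) := by
      intro k hk
      rw [Finset.mem_Ioc] at hk
      have hlk : R.ℓ ≤ 1 * (2^k * Q.ℓ) := by
        rw [one_mul]
        refine le_trans (NQR_spec Q R) ?_
        have h2 : (2:ℝ)^N ≤ 2^k := pow_le_pow_right₀ one_le_two (by omega)
        nlinarith [Q.ℓ_pos]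
      have hp := per_term hC₀ hβ hg R Q hc le_rfl
        (by norm_num : 2*(1+(1:ℝ)) ≤ 2^2) (by omega : 1 ≤ k) hlk
      rw [← hN'2, show N' - (k+2) = (N'-2)-k by omega] at hp
      refine hp.trans (le_of_eq ?_)
      norm_num
    calc ∑ k ∈ Finset.Ioc N N', (μ ((Q.pow2 k).set)).toReal / ((2:ℝ)^k * Q.ℓ)^n
        ≤ ∑ k ∈ Finset.Ioc N N', 4^n * cdC d n C₀ * (rK n βd) ^ ((N'-2) - k) :=
          Finset.sum_le_sum h1
      _ ≤ ∑ k ∈ Finset.Icc 1 N', 4^n * cdC d n C₀ * (rK n βd) ^ ((N'-2) - k) := by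
          refine Finset.sum_le_sum_of_subset_of_nonneg ?_ ?_
          · intro k hk; rw [Finset.mem_Ioc] at hk; rw [Finset.mem_Icc]; omega
          · intro k _ _
            exact mul_nonneg h4n (pow_nonneg hr0 _)
      _ = 4^n * cdC d n C₀ * ∑ k ∈ Finset.Icc 1 N', (rK n βd) ^ ((N'-2) - k) := by
          rw [Finset.mul_sum]
      _ ≤ 4^n * cdC d n C₀ * (1/(1-rK n βd) + ((N'+1-(N'-2) : ℕ) : ℝ)) :=
          mul_le_mul_of_nonneg_left (sum_pow_le hr0 hr1 1 N' (N'-2) le_rfl) h4n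
      _ ≤ 4^n * cdC d n C₀ * (1/(1-rK n βd) + 3) := by
          refine mul_le_mul_of_nonneg_left ?_ h4n
          have h5 : ((N'+1-(N'-2) : ℕ) : ℝ) ≤ 3 :=
            by exact_mod_cast Nat.cast_le.mpr (show N'+1-(N'-2) ≤ 3 by omega)
          linarith
  rw [Icc_eq_Ioc N', Icc_eq_Ioc N]
  linarith [hsplit, htail]

/-- `K_{P̃, Ỹ} ≤ K_{P,D} + A` where `Y = 2^{N_{P,D}+1} P`. -/
lemma K_tilde_shift (hC₀ : 0 < C₀) (hβ : (2:ℝ)^n < βd) (hg : GrowthBound μ n C₀)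
    (P D : CubeOf μ) :
    Kcoef n (P.tilde βd) ((P.pow2 (NQR P D + 1)).tilde βd) ≤
      Kcoef n P D + cdC d n C₀ * (1/(1-rK n βd) + 3) := by
  have hr0 := rK_nonneg hβ
  have hr1 := rK_lt_one hβ
  have hcd := cdC_pos (d := d) (n := n) hC₀
  set N := NQR P D with hN
  set S := P.pow2 (N + 1) with hS
  set t' := tildeIdx μ βd S with ht'
  set tP := tildeIdx μ βd P with htP
  have hSl : S.ℓ = 2^(N+1)*P.ℓ := by rw [hS, pow2_l]
  have hY : S.tilde βd = P.pow2 (N+1+t') := by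
    rw [tilde_def, ← ht', hS, pow2_pow2]
  have htP_le : tP ≤ N+1+t' := by
    rw [htP]
    exact tildeIdx_le (hY ▸ tilde_doubling hC₀ hβ hg S)
  set N₁ := NQR (P.tilde βd) (S.tilde βd) with hN₁
  have hup : tP + N₁ ≤ N+2+t' := by
    rcases le_or_gt N₁ 1 with h | h
    · omega
    · have hmin := NQR_min (Q := P.tilde βd) (R := S.tilde βd) (k := N₁-1)
        (by omega) (by rw [← hN₁]; omega)
      rw [tilde_l, tilde_l, ← htP, ← ht', hSl] at hmin
      have h1 : (2:ℝ)^(N₁-1+tP) * P.ℓ < 2^(t'+(N+1)) * P.ℓ := by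
        calc (2:ℝ)^(N₁-1+tP) * P.ℓ = 2^(N₁-1)*(2^tP*P.ℓ) := by rw [pow_add]; ring
          _ < 2^t' * (2^(N+1)*P.ℓ) := hmin
          _ = 2^(t'+(N+1)) * P.ℓ := by rw [pow_add]; ring
      have h2 := (pow_lt_pow_iff_right₀ (a:=(2:ℝ)) one_lt_two).mp
        (lt_of_mul_lt_mul_right h1 P.ℓ_pos.le)
      omega
  -- rewrite each term of the LHS as a term of the chain of P
  have hterm_eq : ∀ k, (μ (((P.tilde βd).pow2 k).set)).toReal / ((2:ℝ)^k * (P.tilde βd).ℓ)^n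
      = (μ ((P.pow2 (tP+k)).set)).toReal / ((2:ℝ)^(tP+k) * P.ℓ)^n := by
    intro k
    rw [tilde_def (Q := P), ← htP, pow2_pow2, pow2_l]
    rw [show (2:ℝ)^k * (2^tP*P.ℓ) = 2^(tP+k)*P.ℓ by rw [pow_add]; ring]
  -- bound on the terms above scale N
  have hjbound : ∀ j, N+1 ≤ j → (μ ((P.pow2 j).set)).toReal / ((2:ℝ)^j * P.ℓ)^n ≤
      cdC d n C₀ * (rK n βd) ^ ((N+1+t') - j) := by
    intro j hj
    rcases le_or_gt (j - (N+1)) t' with hle | hgt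
    · have h1 := term_chain hC₀ hβ hg S (j := j-(N+1)) (ht' ▸ hle)
      rw [← ht'] at h1
      have h2 : S.pow2 (j-(N+1)) = P.pow2 j := by
        rw [hS, pow2_pow2]; congr 1; omega
      have h3 : (2:ℝ)^(j-(N+1)) * S.ℓ = 2^j * P.ℓ := by
        rw [hSl, show (2:ℝ)^(j-(N+1)) * (2^(N+1)*P.ℓ) = 2^((j-(N+1))+(N+1))*P.ℓ by
          rw [pow_add]; ring]
        congr 2
        omega
      rw [h2, h3] at h1
      rw [show (N+1+t') - j = t' - (j - (N+1)) by omega]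
      exact h1
    · rw [show (N+1+t') - j = 0 by omega, pow_zero, mul_one]
      exact term_le hC₀ hg P j
  -- assemble
  unfold Kcoef
  rw [← hN₁, ← hN]
  have hre : ∑ k ∈ Finset.Icc 1 N₁,
        (μ (((P.tilde βd).pow2 k).set)).toReal / ((2:ℝ)^k * (P.tilde βd).ℓ)^n
      = ∑ j ∈ Finset.Icc (tP+1) (tP+N₁),
        (μ ((P.pow2 j).set)).toReal / ((2:ℝ)^j * P.ℓ)^n := by
    rw [Finset.sum_congr rfl (fun k _ => hterm_eq k)]
    rw [← Finset.map_add_left_Icc, Finset.sum_map]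
    simp only [addLeftEmbedding_apply]
  rw [hre]
  rw [← Finset.sum_filter_add_sum_filter_not (Finset.Icc (tP+1) (tP+N₁)) (fun j => j ≤ N)]
  have hA : ∑ j ∈ (Finset.Icc (tP+1) (tP+N₁)).filter (fun j => j ≤ N),
        (μ ((P.pow2 j).set)).toReal / ((2:ℝ)^j * P.ℓ)^n
      ≤ ∑ j ∈ Finset.Icc 1 N, (μ ((P.pow2 j).set)).toReal / ((2:ℝ)^j * P.ℓ)^n := by
    refine Finset.sum_le_sum_of_subset_of_nonneg ?_ (fun j _ _ => term_nonneg P j)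
    intro j hj
    simp only [Finset.mem_filter, Finset.mem_Icc] at hj
    rw [Finset.mem_Icc]; omega
  have hB : ∑ j ∈ (Finset.Icc (tP+1) (tP+N₁)).filter (fun j => ¬ j ≤ N),
        (μ ((P.pow2 j).set)).toReal / ((2:ℝ)^j * P.ℓ)^n
      ≤ cdC d n C₀ * (1/(1-rK n βd) + 3) := by
    have h1 : ∀ j ∈ (Finset.Icc (tP+1) (tP+N₁)).filter (fun j => ¬ j ≤ N),
        (μ ((P.pow2 j).set)).toReal / ((2:ℝ)^j * P.ℓ)^n ≤
          cdC d n C₀ * (rK n βd) ^ ((N+1+t') - j) := by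
      intro j hj
      simp only [Finset.mem_filter, Finset.mem_Icc, not_le] at hj
      exact hjbound j (by omega)
    calc ∑ j ∈ (Finset.Icc (tP+1) (tP+N₁)).filter (fun j => ¬ j ≤ N),
          (μ ((P.pow2 j).set)).toReal / ((2:ℝ)^j * P.ℓ)^n
        ≤ ∑ j ∈ (Finset.Icc (tP+1) (tP+N₁)).filter (fun j => ¬ j ≤ N),
          cdC d n C₀ * (rK n βd) ^ ((N+1+t') - j) := Finset.sum_le_sum h1
      _ ≤ ∑ j ∈ Finset.Icc (N+1) (N+2+t'), cdC d n C₀ * (rK n βd) ^ ((N+1+t') - j) := by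
          refine Finset.sum_le_sum_of_subset_of_nonneg ?_ ?_
          · intro j hj
            simp only [Finset.mem_filter, Finset.mem_Icc, not_le] at hj
            rw [Finset.mem_Icc]; omega
          · intro j _ _; exact mul_nonneg hcd.le (pow_nonneg hr0 _)
      _ = cdC d n C₀ * ∑ j ∈ Finset.Icc (N+1) (N+2+t'), (rK n βd) ^ ((N+1+t') - j) := by
          rw [Finset.mul_sum]
      _ ≤ cdC d n C₀ * (1/(1-rK n βd) + ((N+2+t'+1-(N+1+t') : ℕ) : ℝ)) :=
          mul_le_mul_of_nonneg_left (sum_pow_le hr0 hr1 (N+1) (N+2+t') (N+1+t') (by omega))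
            hcd.le
      _ ≤ cdC d n C₀ * (1/(1-rK n βd) + 3) := by
          refine mul_le_mul_of_nonneg_left ?_ hcd.le
          have h5 : ((N+2+t'+1-(N+1+t') : ℕ) : ℝ) ≤ 3 :=
            by exact_mod_cast Nat.cast_le.mpr (show N+2+t'+1-(N+1+t') ≤ 3 by omega)
          linarith
  linarith [hA, hB]

end Tolsa28

namespace Tolsa28

variable {d : ℕ} {μ : MeasureTheory.Measure (Euc d)} {n : ℕ} {C₀ βd : ℝ}

open MeasureTheory Metric Set
open scoped ENNReal

lemma mQ_congr {P P' : CubeOf μ} (h : P.set = P'.set) (f : Euc d → ℝ) :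
    mQ μ P f = mQ μ P' f := by unfold mQ; rw [h]

lemma mean_dev (hg : GrowthBound μ n C₀) {f : Euc d → ℝ}
    (hf : MeasureTheory.LocallyIntegrable f μ) (P : CubeOf μ) (a : ℝ) :
    |mQ μ P f - a| * (μ P.set).toReal ≤ ∫ x in P.set, |f x - a| ∂μ := by
  have hm0 : 0 < (μ P.set).toReal :=
    ENNReal.toReal_pos (ne_of_gt (set_pos P)) (set_ne_top hg P)
  have hfi := integrableOn_set hf P
  have hconst : MeasureTheory.IntegrableOn (fun _ => a) P.set μ :=
    MeasureTheory.integrableOn_const (set_ne_top hg P)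
  have h1 : ∫ x in P.set, (f x - a) ∂μ
      = (∫ x in P.set, f x ∂μ) - (μ P.set).toReal * a := by
    rw [MeasureTheory.integral_sub hfi hconst, MeasureTheory.setIntegral_const, smul_eq_mul,
        measureReal_def]
  have h2 : mQ μ P f - a = (μ P.set).toReal⁻¹ * (∫ x in P.set, (f x - a) ∂μ) := by
    rw [mQ, MeasureTheory.setAverage_eq, smul_eq_mul, h1, measureReal_def]
    field_simp
  rw [h2, abs_mul, abs_inv, abs_of_pos hm0]
  rw [show (μ P.set).toReal⁻¹ * |∫ x in P.set, (f x - a) ∂μ| * (μ P.set).toReal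
      = |∫ x in P.set, (f x - a) ∂μ| by field_simp]
  have h5 := MeasureTheory.norm_integral_le_integral_norm
    (μ := μ.restrict P.set) (fun x => f x - a)
  simpa [Real.norm_eq_abs] using h5

lemma lint_eq {g : Euc d → ℝ} {s : Set (Euc d)} (hi : MeasureTheory.IntegrableOn g s μ) :
    ∫⁻ x in s, ENNReal.ofReal |g x| ∂μ = ENNReal.ofReal (∫ x in s, |g x| ∂μ) :=
  (MeasureTheory.ofReal_integral_eq_lintegral_ofReal hi.abs
    (Filter.Eventually.of_forall fun x => abs_nonneg (g x))).symm

lemma lint_triangle {f : Euc d → ℝ} (s : Set (Euc d)) (a b : ℝ) :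
    ∫⁻ x in s, ENNReal.ofReal |f x - b| ∂μ ≤
      ∫⁻ x in s, ENNReal.ofReal |f x - a| ∂μ + ENNReal.ofReal |a - b| * μ s := by
  have h1 : ∀ x, ENNReal.ofReal |f x - b| ≤
      ENNReal.ofReal |f x - a| + ENNReal.ofReal |a - b| := fun x =>
    le_trans (ENNReal.ofReal_le_ofReal (by
      have h : |f x - b| ≤ |f x - a| + |a - b| := abs_sub_le (f x) a b
      linarith)) ENNReal.ofReal_add_le
  calc ∫⁻ x in s, ENNReal.ofReal |f x - b| ∂μ
      ≤ ∫⁻ x in s, (ENNReal.ofReal |f x - a| + ENNReal.ofReal |a - b|) ∂μ :=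
        lintegral_mono fun x => h1 x
    _ = ∫⁻ x in s, ENNReal.ofReal |f x - a| ∂μ + ENNReal.ofReal |a - b| * μ s := by
        rw [lintegral_add_right _ measurable_const, MeasureTheory.setLIntegral_const]

lemma mean_dev_lint (hg : GrowthBound μ n C₀) {f : Euc d → ℝ}
    (hf : MeasureTheory.LocallyIntegrable f μ) (P : CubeOf μ) (a : ℝ) :
    ENNReal.ofReal |mQ μ P f - a| * μ P.set ≤
      ∫⁻ x in P.set, ENNReal.ofReal |f x - a| ∂μ := by
  have hi : MeasureTheory.IntegrableOn (fun x => f x - a) P.set μ :=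
    (integrableOn_set hf P).sub
      (MeasureTheory.integrableOn_const (set_ne_top hg P))
  rw [lint_eq hi]
  conv_lhs => rw [← ENNReal.ofReal_toReal (set_ne_top hg P)]
  rw [← ENNReal.ofReal_mul (abs_nonneg _)]
  exact ENNReal.ofReal_le_ofReal (mean_dev hg hf P a)

lemma ofReal_le_extract {x K : ℝ} {C' : ℝ≥0∞} (hC' : C' ≠ ⊤) (hK : 0 ≤ K)
    (h : ENNReal.ofReal x ≤ C' * ENNReal.ofReal K) : x ≤ C'.toReal * K := by
  rcases le_or_gt x 0 with h0 | h0
  · exact h0.trans (mul_nonneg ENNReal.toReal_nonneg hK)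
  · have h2 := ENNReal.toReal_mono (ENNReal.mul_ne_top hC' ENNReal.ofReal_ne_top) h
    rwa [ENNReal.toReal_ofReal h0.le, ENNReal.toReal_mul, ENNReal.toReal_ofReal hK] at h2

lemma extract_to_ofReal {x A : ℝ} {C' : ℝ≥0∞} (h : x ≤ C'.toReal * A) :
    ENNReal.ofReal x ≤ C' * ENNReal.ofReal A := by
  calc ENNReal.ofReal x ≤ ENNReal.ofReal (C'.toReal * A) := ENNReal.ofReal_le_ofReal h
    _ = ENNReal.ofReal C'.toReal * ENNReal.ofReal A :=
        ENNReal.ofReal_mul ENNReal.toReal_nonneg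
    _ ≤ C' * ENNReal.ofReal A := by
        gcongr
        exact ENNReal.ofReal_toReal_le

lemma le_mul_sInf {y b : ℝ≥0∞} {S : Set ℝ≥0∞} (hb0 : b ≠ 0) (hbt : b ≠ ⊤)
    (h : ∀ x ∈ S, y ≤ b * x) : y ≤ b * sInf S := by
  have h1 : y / b ≤ sInf S := le_sInf fun x hx => by
    rw [ENNReal.div_le_iff hb0 hbt]
    exact (h x hx).trans (le_of_eq (mul_comm b x))
  have h2 := (ENNReal.div_le_iff hb0 hbt).mp h1
  exact h2.trans (le_of_eq (mul_comm _ b))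

lemma null_compl : μ ((measSupp μ)ᶜ) = 0 := by
  have hx : ∀ x : ((measSupp μ)ᶜ : Set (Euc d)), ∃ r : ℝ, 0 < r ∧
      μ (Metric.ball (x : Euc d) r) = 0 := by
    rintro ⟨x, hx⟩
    simp only [Set.mem_compl_iff, measSupp, Set.mem_setOf_eq, not_forall, not_lt] at hx
    obtain ⟨r, hr, hr0⟩ := hx
    exact ⟨r, hr, le_antisymm hr0 (by simp)⟩
  choose rr hrr hrr0 using hx
  obtain ⟨T, hTc, hTU⟩ := TopologicalSpace.isOpen_iUnion_countable
    (fun x : ((measSupp μ)ᶜ : Set (Euc d)) => Metric.ball (x : Euc d) (rr x))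
    (fun _ => Metric.isOpen_ball)
  have hsub : ((measSupp μ)ᶜ : Set (Euc d)) ⊆ ⋃ x ∈ T, Metric.ball (x : Euc d) (rr x) := by
    rw [hTU]
    intro y hy
    exact Set.mem_iUnion.mpr ⟨⟨y, hy⟩, Metric.mem_ball_self (hrr ⟨y, hy⟩)⟩
  refine le_antisymm (le_trans (measure_mono hsub) ?_) (by simp)
  rw [show (0:ℝ≥0∞) = ⊥ from rfl, le_bot_iff]
  exact (MeasureTheory.measure_biUnion_null_iff hTc).mpr fun x _ => hrr0 x

lemma cover_lemma (Q : CubeOf μ) (M : ℕ) (hM : 0 < M) :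
    ∃ s : Finset (CubeOf μ), s.card ≤ M ^ d ∧
      (∀ B ∈ s, B.ℓ = 2 * Q.ℓ / M ∧ B.c ∈ Q.set) ∧
      μ (Q.set \ ⋃ B ∈ s, B.set) = 0 := by
  classical
  have hl := Q.ℓ_pos
  have hM0 : (0:ℝ) < M := by exact_mod_cast hM
  set δ : ℝ := Q.ℓ / M with hδ
  have hδ0 : 0 < δ := by positivity
  have hMδ : (M:ℝ) * δ = Q.ℓ := by rw [hδ]; field_simp
  set pv : (Fin d → Fin M) → Fin d → ℝ :=
    fun v i => Q.c i - Q.ℓ/2 + (((v i : ℕ) : ℝ) + 1/2) * δ with hpv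
  set Sv : (Fin d → Fin M) → Set (Euc d) :=
    fun v => {y : Euc d | ∀ i, |y i - pv v i| ≤ δ/2} with hSv
  have hSvQ : ∀ v, Sv v ⊆ Q.set := by
    intro v y hy i
    have h1 : |y i - pv v i| ≤ δ/2 := hy i
    have h2 : |pv v i - Q.c i| ≤ Q.ℓ/2 - δ/2 := by
      rw [hpv]
      rw [show Q.c i - Q.ℓ/2 + (((v i : ℕ) : ℝ) + 1/2) * δ - Q.c i
        = (((v i : ℕ) : ℝ) + 1/2) * δ - Q.ℓ/2 by ring]
      have hvlt := (v i).is_lt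
      have hv1 : ((v i : ℕ) : ℝ) ≤ (M:ℝ) - 1 := by
        have h3 : ((v i : ℕ) : ℝ) ≤ ((M - 1 : ℕ) : ℝ) := Nat.cast_le.mpr (by omega)
        rwa [Nat.cast_sub hM, Nat.cast_one] at h3
      have hv0 : (0:ℝ) ≤ ((v i : ℕ) : ℝ) := Nat.cast_nonneg _
      rw [abs_le]
      constructor <;> nlinarith
    calc |y i - Q.c i| ≤ |y i - pv v i| + |pv v i - Q.c i| := abs_sub_le _ _ _
      _ ≤ δ/2 + (Q.ℓ/2 - δ/2) := add_le_add h1 h2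
      _ = Q.ℓ/2 := by ring
  have hcov : ∀ y ∈ Q.set, ∃ v, y ∈ Sv v := by
    intro y hy
    have hvi : ∀ i : Fin d, ∃ kk : Fin M,
        |y i - (Q.c i - Q.ℓ/2 + (((kk : ℕ) : ℝ) + 1/2) * δ)| ≤ δ/2 := by
      intro i
      set t : ℝ := y i - (Q.c i - Q.ℓ/2) with htdef
      have hyi := hy i
      rw [abs_le] at hyi
      have ht0 : 0 ≤ t := by rw [htdef]; linarith [hyi.1]
      have ht1 : t ≤ Q.ℓ := by rw [htdef]; linarith [hyi.2]
      set k' : ℕ := min (Nat.floor (t/δ)) (M-1) with hk'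
      have hkM : k' < M := by omega
      refine ⟨⟨k', hkM⟩, ?_⟩
      have hkv : (((⟨k', hkM⟩ : Fin M) : ℕ) : ℝ) = (k' : ℝ) := rfl
      have hlow : (k':ℝ) * δ ≤ t := by
        rcases le_or_gt (Nat.floor (t/δ)) (M-1) with hc | hc
        · have hk'' : k' = Nat.floor (t/δ) := by omega
          rw [hk'']
          calc (Nat.floor (t/δ) : ℝ) * δ ≤ (t/δ) * δ :=
              mul_le_mul_of_nonneg_right (Nat.floor_le (by positivity)) hδ0.le
            _ = t := by field_simp
        · have hk'' : k' = M-1 := by omega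
          rw [hk'']
          have h2 : (M:ℝ) ≤ t/δ := by
            have h3 : (M:ℝ) ≤ (Nat.floor (t/δ) : ℝ) :=
              Nat.cast_le.mpr (show M ≤ Nat.floor (t/δ) by omega)
            exact h3.trans (Nat.floor_le (by positivity))
          have h4 : (M:ℝ)*δ ≤ t := by
            rw [le_div_iff₀ hδ0] at h2; linarith
          have h5 : ((M-1 : ℕ):ℝ) ≤ (M:ℝ) := Nat.cast_le.mpr (Nat.sub_le M 1)
          nlinarith
      have hhigh : t ≤ ((k':ℝ)+1) * δ := by
        rcases le_or_gt (Nat.floor (t/δ)) (M-1) with hc | hc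
        · have hk'' : k' = Nat.floor (t/δ) := by omega
          rw [hk'']
          have h2 : t/δ < Nat.floor (t/δ) + 1 := Nat.lt_floor_add_one _
          rw [div_lt_iff₀ hδ0] at h2
          linarith
        · have hk'' : k' = M-1 := by omega
          rw [hk'']
          have h5 : ((M-1:ℕ):ℝ)+1 = (M:ℝ) := by
            rw [Nat.cast_sub hM, Nat.cast_one]; ring
          rw [h5, hMδ]
          exact ht1
      have heq : y i - (Q.c i - Q.ℓ/2 + ((((⟨k', hkM⟩ : Fin M) : ℕ) : ℝ) + 1/2) * δ)
          = t - ((k':ℝ) + 1/2)*δ := by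
        rw [hkv, htdef]; ring
      clear_value t k'
      rw [heq, abs_le]
      refine ⟨by nlinarith [hlow, hδ0.le], by nlinarith [hhigh, hδ0.le]⟩
    choose kk hkk using hvi
    exact ⟨kk, fun i => hkk i⟩
  set pred : (Fin d → Fin M) → Prop := fun v => (Sv v ∩ measSupp μ).Nonempty with hpred
  set Bv : (Fin d → Fin M) → CubeOf μ := fun v =>
    if h : (Sv v ∩ measSupp μ).Nonempty then
      ⟨Exists.choose h, 2*Q.ℓ/M, by positivity, (Exists.choose_spec h).2⟩
    else Q with hBv
  refine ⟨(Finset.univ.filter pred).image Bv, ?_, ?_, ?_⟩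
  · calc ((Finset.univ.filter pred).image Bv).card ≤ (Finset.univ.filter pred).card :=
        Finset.card_image_le
      _ ≤ (Finset.univ : Finset (Fin d → Fin M)).card := Finset.card_filter_le _ _
      _ = M ^ d := by
          rw [Finset.card_univ, Fintype.card_fun, Fintype.card_fin, Fintype.card_fin]
  · intro B hB
    rw [Finset.mem_image] at hB
    obtain ⟨v, hv, rfl⟩ := hB
    rw [Finset.mem_filter] at hv
    have hpv2 : (Sv v ∩ measSupp μ).Nonempty := hv.2
    constructor
    · simp only [hBv]; rw [dif_pos hpv2]
    · have hme : (Bv v).c = Exists.choose hpv2 := by simp only [hBv]; rw [dif_pos hpv2]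
      rw [hme]
      exact hSvQ v (Exists.choose_spec hpv2).1
  · refine measure_mono_null ?_ (null_compl (μ := μ))
    intro y hy
    obtain ⟨hyQ, hyn⟩ := hy
    simp only [Set.mem_compl_iff]
    intro hyS
    obtain ⟨v, hv⟩ := hcov y hyQ
    have hpv2 : (Sv v ∩ measSupp μ).Nonempty := ⟨y, hv, hyS⟩
    apply hyn
    have hmem : Bv v ∈ (Finset.univ.filter pred).image Bv :=
      Finset.mem_image_of_mem Bv (Finset.mem_filter.mpr ⟨Finset.mem_univ v, hpv2⟩)
    refine Set.mem_biUnion hmem ?_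
    have hme : (Bv v).c = Exists.choose hpv2 := by simp only [hBv]; rw [dif_pos hpv2]
    have hll : (Bv v).ℓ = 2*Q.ℓ/M := by simp only [hBv]; rw [dif_pos hpv2]
    intro i
    rw [hme, hll]
    have h1 : |y i - pv v i| ≤ δ/2 := hv i
    have h2 : |Exists.choose hpv2 i - pv v i| ≤ δ/2 := (Exists.choose_spec hpv2).1 i
    have h3 := abs_sub_le (y i) (pv v i) (Exists.choose hpv2 i)
    rw [abs_sub_comm (pv v i)] at h3
    have h4 : 2*Q.ℓ/(M:ℝ)/2 = δ := by rw [hδ]; ring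
    rw [h4]
    linarith

lemma lintegral_finset_biUnion_le (s : Finset (CubeOf μ)) (g : Euc d → ℝ≥0∞) :
    ∫⁻ x in ⋃ B ∈ s, B.set, g x ∂μ ≤ ∑ B ∈ s, ∫⁻ x in B.set, g x ∂μ := by
  classical
  induction s using Finset.induction with
  | empty => simp
  | insert B s hBs ih =>
    rw [Finset.set_biUnion_insert, Finset.sum_insert hBs]
    exact (MeasureTheory.lintegral_union_le _ _ _).trans (by gcongr)

lemma lintegral_cover_le (Q : CubeOf μ) (s : Finset (CubeOf μ))
    (hnull : μ (Q.set \ ⋃ B ∈ s, B.set) = 0) (g : Euc d → ℝ≥0∞) :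
    ∫⁻ x in Q.set, g x ∂μ ≤ ∑ B ∈ s, ∫⁻ x in B.set, g x ∂μ := by
  have h1 : Q.set ⊆ (⋃ B ∈ s, B.set) ∪ (Q.set \ ⋃ B ∈ s, B.set) := by
    intro y hy
    by_cases h : y ∈ ⋃ B ∈ s, B.set
    exacts [Or.inl h, Or.inr ⟨hy, h⟩]
  calc ∫⁻ x in Q.set, g x ∂μ
      ≤ ∫⁻ x in (⋃ B ∈ s, B.set) ∪ (Q.set \ ⋃ B ∈ s, B.set), g x ∂μ :=
        MeasureTheory.lintegral_mono_set h1
    _ ≤ (∫⁻ x in ⋃ B ∈ s, B.set, g x ∂μ) + ∫⁻ x in Q.set \ ⋃ B ∈ s, B.set, g x ∂μ :=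
        MeasureTheory.lintegral_union_le _ _ _
    _ = ∫⁻ x in ⋃ B ∈ s, B.set, g x ∂μ := by
        rw [MeasureTheory.setLIntegral_measure_zero _ _ hnull, add_zero]
    _ ≤ ∑ B ∈ s, ∫⁻ x in B.set, g x ∂μ := lintegral_finset_biUnion_le s g

end Tolsa28

namespace Tolsa28

variable {d : ℕ} {μ : MeasureTheory.Measure (Euc d)} {n : ℕ} {C₀ βd : ℝ}

open MeasureTheory Metric Set
open scoped ENNReal

lemma r2_real {f : Euc d → ℝ} {C' : ℝ≥0∞} (hC' : C' ≠ ⊤)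
    (h2 : ∀ Q R : CubeOf μ, Q.set ⊆ R.set → IsDoubling μ 2 βd Q → IsDoubling μ 2 βd R →
      ENNReal.ofReal |mQ μ Q f - mQ μ R f| ≤ C' * ENNReal.ofReal (Kcoef n Q R))
    {Q R : CubeOf μ} (hsub : Q.set ⊆ R.set) (hdQ : IsDoubling μ 2 βd Q)
    (hdR : IsDoubling μ 2 βd R) :
    |mQ μ Q f - mQ μ R f| ≤ C'.toReal * Kcoef n Q R :=
  ofReal_le_extract hC' (Kcoef_nonneg Q R) (h2 Q R hsub hdQ hdR)

lemma set_subset_pow2 (Q : CubeOf μ) (k : ℕ) : Q.set ⊆ (Q.pow2 k).set := by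
  have h := pow2_set_mono Q (Nat.zero_le k)
  rwa [pow2_zero] at h

/-- Constant in the master lemma. -/
noncomputable def AML (d n : ℕ) (C₀ βd : ℝ) : ℝ :=
  cdC d n C₀ * (1/(1-rK n βd) + 3) + 1 +
    (2*(1+(4:ℝ)))^n * cdC d n C₀ * (1/(1-rK n βd) + (4+1))

lemma AML_nonneg (hC₀ : 0 < C₀) (hβ : (2:ℝ)^n < βd) : 0 ≤ AML d n C₀ βd := by
  have hcd := cdC_pos (d := d) (n := n) hC₀
  have hr1 := rK_lt_one (n := n) hβ
  have h1 : (0:ℝ) < 1/(1-rK n βd) := by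
    have : (0:ℝ) < 1 - rK n βd := by linarith
    positivity
  have h2 : (0:ℝ) ≤ (2*(1+(4:ℝ)))^n := by positivity
  unfold AML
  have h3 := mul_nonneg (mul_nonneg h2 hcd.le) (by linarith : (0:ℝ) ≤ 1/(1-rK n βd) + (4+1))
  nlinarith

/-- Master Lemma: for any cube `P` contained in a doubling cube `D`,
`|m_{P̃} f − m_D f| ≤ C (K_{P,D} + A)`. -/
lemma ML (hC₀ : 0 < C₀) (hβ : (2:ℝ)^n < βd) (hg : GrowthBound μ n C₀) (hd : 0 < d)
    {f : Euc d → ℝ} {C' : ℝ≥0∞} (hC' : C' ≠ ⊤)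
    (h2 : ∀ Q R : CubeOf μ, Q.set ⊆ R.set → IsDoubling μ 2 βd Q → IsDoubling μ 2 βd R →
      ENNReal.ofReal |mQ μ Q f - mQ μ R f| ≤ C' * ENNReal.ofReal (Kcoef n Q R))
    (P D : CubeOf μ) (hPD : P.set ⊆ D.set) (hD : IsDoubling μ 2 βd D) :
    |mQ μ (P.tilde βd) f - mQ μ D f| ≤
      C'.toReal * (Kcoef n P D + AML d n C₀ βd) := by
  have hc' : (0:ℝ) ≤ C'.toReal := ENNReal.toReal_nonneg
  have hcd := cdC_pos (d := d) (n := n) hC₀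
  set N := NQR P D with hN
  set S := P.pow2 (N + 1) with hS
  have hSl : S.ℓ = 2^(N+1)*P.ℓ := by rw [hS, pow2_l]
  set Y := S.tilde βd with hY
  have hYd : IsDoubling μ 2 βd Y := tilde_doubling hC₀ hβ hg S
  have hPtd : IsDoubling μ 2 βd (P.tilde βd) := tilde_doubling hC₀ hβ hg P
  -- P.tilde ⊆ Y
  have hYP : Y = P.pow2 (N+1+ tildeIdx μ βd S) := by
    rw [hY, tilde_def, hS, pow2_pow2]
  have htP_le : tildeIdx μ βd P ≤ N+1+ tildeIdx μ βd S :=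
    tildeIdx_le (hYP ▸ hYd)
  have hPtY : (P.tilde βd).set ⊆ Y.set := by
    rw [tilde_def, hYP]
    exact pow2_set_mono P htP_le
  -- first comparison
  have hcomp1 : |mQ μ (P.tilde βd) f - mQ μ Y f| ≤
      C'.toReal * (Kcoef n P D + cdC d n C₀ * (1/(1-rK n βd) + 3)) := by
    refine (r2_real hC' h2 hPtY hPtd hYd).trans ?_
    have hK := K_tilde_shift (βd := βd) hC₀ hβ hg P D
    rw [← hN, ← hS, ← hY] at hK
    nlinarith
  -- D is inside S
  have hPcD : ∀ i, |D.c i - P.c i| ≤ D.ℓ/2 := by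
    intro i
    have h1 := hPD (c_mem_set P) i
    rw [abs_sub_comm]
    exact h1
  have hDl : D.ℓ ≤ 2^N * P.ℓ := NQR_spec P D
  have hDS : D.set ⊆ S.set := by
    refine set_subset_set (e := D.ℓ/2) (fun i => hPcD i) ?_
    rw [hSl]
    have h4 : (2:ℝ)^(N+1)*P.ℓ = 2*(2^N*P.ℓ) := by rw [pow_succ]; ring
    linarith
  have hDY : D.set ⊆ Y.set := hDS.trans (subset_tilde βd S)
  -- D center in S, and S.ℓ ≤ 4 D.ℓ
  have hcD : D.c ∈ S.set := hDS (c_mem_set D)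
  have hlSD : S.ℓ ≤ 4 * D.ℓ := by
    rw [hSl]
    have hN1 : 1 ≤ N := NQR_one_le P D
    rcases eq_or_lt_of_le hN1 with h1 | h1
    · have hPl : P.ℓ ≤ D.ℓ := sub_len hd hPD
      rw [← h1]
      norm_num
      nlinarith
    · have hmin := NQR_min (Q := P) (R := D) (k := N-1) (by omega) (by omega)
      have h3 : (2:ℝ)^(N+1) = 4*2^(N-1) := by
        rw [show N+1 = (N-1)+2 by omega, pow_add]
        ring
      rw [h3]
      nlinarith
  have hcomp2 : |mQ μ D f - mQ μ Y f| ≤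
      C'.toReal * (1 + (2*(1+(4:ℝ)))^n * cdC d n C₀ * (1/(1-rK n βd) + (4+1))) := by
    refine (r2_real hC' h2 hDY hD hYd).trans ?_
    have hK := K_tilde_le (βd := βd) hC₀ hβ hg S D hcD
      (by norm_num : (1:ℝ) ≤ 4) (by norm_num : 2*(1+(4:ℝ)) ≤ 2^4) hlSD
    rw [← hY] at hK
    have : ((4:ℕ):ℝ) + 1 = ((4:ℝ)+1) := by norm_num
    nlinarith [hK]
  calc |mQ μ (P.tilde βd) f - mQ μ D f|
      ≤ |mQ μ (P.tilde βd) f - mQ μ Y f| + |mQ μ D f - mQ μ Y f| := by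
        have := abs_sub_le (mQ μ (P.tilde βd) f) (mQ μ Y f) (mQ μ D f)
        rw [abs_sub_comm (mQ μ Y f) (mQ μ D f)] at this
        exact this
    _ ≤ C'.toReal * (Kcoef n P D + cdC d n C₀ * (1/(1-rK n βd) + 3))
        + C'.toReal * (1 + (2*(1+(4:ℝ)))^n * cdC d n C₀ * (1/(1-rK n βd) + (4+1))) :=
        add_le_add hcomp1 hcomp2
    _ = C'.toReal * (Kcoef n P D + AML d n C₀ βd) := by
        rw [AML]; ring

/-- Constant in the concentric comparison. -/
noncomputable def A6c (d n : ℕ) (C₀ βd : ℝ) : ℝ :=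
  1 + (2*(1+(2:ℝ)))^n * cdC d n C₀ * (1/(1-rK n βd) + (3+1)) +
    (2*(1+(1:ℝ)))^n * cdC d n C₀ * (1/(1-rK n βd) + (2+1))

lemma A6c_nonneg (hC₀ : 0 < C₀) (hβ : (2:ℝ)^n < βd) : 0 ≤ A6c d n C₀ βd := by
  have hcd := cdC_pos (d := d) (n := n) hC₀
  have hr1 := rK_lt_one (n := n) hβ
  have h1 : (0:ℝ) < 1/(1-rK n βd) := by
    have : (0:ℝ) < 1 - rK n βd := by linarith
    positivity
  have h2 : (0:ℝ) ≤ (2*(1+(2:ℝ)))^n := by positivity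
  have h3 : (0:ℝ) ≤ (2*(1+(1:ℝ)))^n := by positivity
  unfold A6c
  have h4 := mul_nonneg (mul_nonneg h2 hcd.le) (by linarith : (0:ℝ) ≤ 1/(1-rK n βd) + (3+1))
  have h5 := mul_nonneg (mul_nonneg h3 hcd.le) (by linarith : (0:ℝ) ≤ 1/(1-rK n βd) + (2+1))
  linarith

/-- Comparison of `m_{Q̃} f` and `m_{(2Q)̃} f`. -/
lemma concentric_tilde (hC₀ : 0 < C₀) (hβ : (2:ℝ)^n < βd) (hg : GrowthBound μ n C₀)
    {f : Euc d → ℝ} {C' : ℝ≥0∞} (hC' : C' ≠ ⊤)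
    (h2 : ∀ Q R : CubeOf μ, Q.set ⊆ R.set → IsDoubling μ 2 βd Q → IsDoubling μ 2 βd R →
      ENNReal.ofReal |mQ μ Q f - mQ μ R f| ≤ C' * ENNReal.ofReal (Kcoef n Q R))
    (Q : CubeOf μ) :
    |mQ μ (Q.tilde βd) f - mQ μ ((Q.pow2 1).tilde βd) f| ≤
      C'.toReal * A6c d n C₀ βd := by
  have hc' : (0:ℝ) ≤ C'.toReal := ENNReal.toReal_nonneg
  have hcd := cdC_pos (d := d) (n := n) hC₀
  have hr1 := rK_lt_one (n := n) hβ
  have hinv : (0:ℝ) < 1/(1-rK n βd) := by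
    have : (0:ℝ) < 1 - rK n βd := by linarith
    positivity
  have hQt : IsDoubling μ 2 βd (Q.tilde βd) := tilde_doubling hC₀ hβ hg Q
  have hGt : IsDoubling μ 2 βd ((Q.pow2 1).tilde βd) := tilde_doubling hC₀ hβ hg (Q.pow2 1)
  have hGY : (Q.pow2 1).tilde βd = Q.pow2 (1 + tildeIdx μ βd (Q.pow2 1)) := by
    rw [tilde_def, pow2_pow2]
  have hA2 : (0:ℝ) ≤ (2*(1+(2:ℝ)))^n * cdC d n C₀ * (1/(1-rK n βd) + (3+1)) := by
    positivity
  have hA1 : (0:ℝ) ≤ (2*(1+(1:ℝ)))^n * cdC d n C₀ * (1/(1-rK n βd) + (2+1)) := by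
    positivity
  rcases le_or_gt (tildeIdx μ βd Q) (1 + tildeIdx μ βd (Q.pow2 1)) with hcase | hcase
  · -- Q.tilde ⊆ G
    have hsub : (Q.tilde βd).set ⊆ ((Q.pow2 1).tilde βd).set := by
      rw [tilde_def (Q := Q), hGY]
      exact pow2_set_mono Q hcase
    refine (r2_real hC' h2 hsub hQt hGt).trans ?_
    have hK := K_tilde_le (βd := βd) hC₀ hβ hg (Q.pow2 1) (Q.tilde βd)
      (c_mem_set (Q.pow2 1)) (by norm_num : (1:ℝ) ≤ 2)
      (by norm_num : 2*(1+(2:ℝ)) ≤ 2^3) ?_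
    · rw [A6c]
      have h3 : ((3:ℕ):ℝ) + 1 = (3:ℝ)+1 := by norm_num
      nlinarith [hK]
    · -- (Q.pow2 1).ℓ ≤ 2 * (Q.tilde βd).ℓ
      rw [pow2_l, pow_one, tilde_l]
      have h1 : (1:ℝ) ≤ 2 ^ (tildeIdx μ βd Q) := one_le_pow₀ one_le_two
      nlinarith [Q.ℓ_pos]
  · -- G ⊆ Q.tilde
    have hsub : ((Q.pow2 1).tilde βd).set ⊆ (Q.tilde βd).set := by
      rw [tilde_def (Q := Q), hGY]
      exact pow2_set_mono Q (by omega)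
    rw [abs_sub_comm]
    refine (r2_real hC' h2 hsub hGt hQt).trans ?_
    have hK := K_tilde_le (βd := βd) hC₀ hβ hg Q ((Q.pow2 1).tilde βd)
      (c_mem_set Q) le_rfl (by norm_num : 2*(1+(1:ℝ)) ≤ 2^2) ?_
    · rw [A6c]
      have h3 : ((2:ℕ):ℝ) + 1 = (2:ℝ)+1 := by norm_num
      nlinarith [hK]
    · -- Q.ℓ ≤ 1 * ((Q.pow2 1).tilde βd).ℓ
      rw [one_mul, tilde_l, pow2_l, pow_one]
      have h1 : (1:ℝ) ≤ 2 ^ (tildeIdx μ βd (Q.pow2 1)) := one_le_pow₀ one_le_two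
      nlinarith [Q.ℓ_pos]

end Tolsa28

namespace Tolsa28

open MeasureTheory Metric Set
open scoped ENNReal

set_option maxHeartbeats 3000000 in
lemma P1_ex {d n : ℕ} {C₀ βd ρ : ℝ} (hn : 1 ≤ n) (hnd : n ≤ d) (hC₀ : 0 < C₀)
    (hβ : (2:ℝ)^n < βd) (hρ : 1 < ρ) :
    ∃ A : ℝ, 1 ≤ A ∧ ∀ (μ : MeasureTheory.Measure (Euc d)), GrowthBound μ n C₀ →
      ∀ f : Euc d → ℝ, MeasureTheory.LocallyIntegrable f μ →
      ∀ C' : ℝ≥0∞, RBMOBoundWith μ n βd f C' →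
        StarStarBoundWith μ n ρ f (fun Q => mQ μ (Q.tilde βd) f) (ENNReal.ofReal A * C') := by
  classical
  have hd : 0 < d := lt_of_lt_of_le hn hnd
  have hcd := cdC_pos (d := d) (n := n) hC₀
  have hr1 := rK_lt_one (n := n) hβ
  have hr0 := rK_nonneg (n := n) hβ
  have hinv : (0:ℝ) < 1/(1-rK n βd) := by
    have : (0:ℝ) < 1 - rK n βd := by linarith
    positivity
  have hAML := AML_nonneg (d := d) hC₀ hβ
  have hA6 := A6c_nonneg (d := d) hC₀ hβ
  obtain ⟨M₁, hM₁4, hM₁ρ⟩ : ∃ M : ℕ, 4 ≤ M ∧ 4/(ρ-1) ≤ (M:ℝ) := by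
    refine ⟨4 + Nat.ceil (4/(ρ-1)), by omega, ?_⟩
    calc 4/(ρ-1) ≤ (Nat.ceil (4/(ρ-1)) : ℝ) := Nat.le_ceil _
      _ ≤ ((4 + Nat.ceil (4/(ρ-1)) : ℕ) : ℝ) := by
          exact_mod_cast Nat.cast_le.mpr (Nat.le_add_left _ 4)
  have hM₁0 : 0 < M₁ := by omega
  have hM₁R : (4:ℝ) ≤ (M₁:ℝ) := by exact_mod_cast Nat.cast_le.mpr hM₁4
  have hM₁0' : (0:ℝ) < (M₁:ℝ) := by linarith
  set KBG : ℝ := 1 + (2*(1+(M₁:ℝ)))^n * cdC d n C₀ *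
    (1/(1-rK n βd) + (((M₁+2:ℕ):ℝ)+1)) with hKBGdef
  have hKBG0 : 0 ≤ KBG := by
    have h1 : (0:ℝ) ≤ (2*(1+(M₁:ℝ)))^n := by positivity
    have h2 : (0:ℝ) ≤ ((M₁+2:ℕ):ℝ)+1 := by positivity
    have h3 := mul_nonneg (mul_nonneg h1 hcd.le)
      (by linarith : (0:ℝ) ≤ 1/(1-rK n βd) + (((M₁+2:ℕ):ℝ)+1))
    rw [hKBGdef]; linarith
  set A7 : ℝ := KBG + AML d n C₀ βd + A6c d n C₀ βd with hA7def
  have hA70 : (0:ℝ) ≤ A7 := by rw [hA7def]; linarith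
  set Abonus : ℝ := 4^n * cdC d n C₀ * (1/(1-rK n βd) + 3) with hAbdef
  have hAb0 : (0:ℝ) ≤ Abonus := by
    rw [hAbdef]
    have h1 : (0:ℝ) ≤ (4:ℝ)^n := by positivity
    exact mul_nonneg (mul_nonneg h1 hcd.le) (by linarith)
  set Acond1 : ℝ := (M₁:ℝ)^d * (1 + A7) with hAc1def
  have hAc10 : (0:ℝ) ≤ Acond1 := by
    rw [hAc1def]
    exact mul_nonneg (by positivity) (by linarith)
  set Acond2 : ℝ := 1 + Abonus + AML d n C₀ βd with hAc2def
  have hAc20 : (0:ℝ) ≤ Acond2 := by rw [hAc2def]; linarith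
  refine ⟨1 + Acond1 + Acond2, by linarith, ?_⟩
  intro μ hg f hf C' hr
  by_cases hC' : C' = ⊤
  · subst hC'
    have hA0 : (ENNReal.ofReal (1 + Acond1 + Acond2)) ≠ 0 := by
      rw [ne_eq, ENNReal.ofReal_eq_zero, not_le]; linarith
    rw [ENNReal.mul_top hA0]
    constructor
    · intro Q
      have hpos : μ (Q.dil ρ) ≠ 0 :=
        ne_of_gt (lt_of_lt_of_le (set_pos Q) (measure_mono (set_subset_dil Q hρ.le)))
      rw [ENNReal.top_mul hpos]
      exact le_top
    · intro Q R hQR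
      have hpos : ENNReal.ofReal (Kcoef n Q R) ≠ 0 := by
        rw [ne_eq, ENNReal.ofReal_eq_zero, not_le]
        linarith [one_le_Kcoef (μ := μ) (n := n) Q R]
      rw [ENNReal.top_mul hpos]
      exact le_top
  · have hc' : (0:ℝ) ≤ C'.toReal := ENNReal.toReal_nonneg
    have h1A : (1:ℝ≥0∞) ≤ ENNReal.ofReal (1 + Acond1 + Acond2) := by
      rw [ENNReal.one_le_ofReal]; linarith
    constructor
    · -- condition 1
      intro Q
      have hQl := Q.ℓ_pos
      rcases le_or_gt 2 ρ with hcase | hcase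
      · calc ∫⁻ x in Q.set, ENNReal.ofReal |f x - mQ μ (Q.tilde βd) f| ∂μ
            ≤ C' * μ (Q.dil 2) := hr.1 Q
          _ ≤ C' * μ (Q.dil ρ) := mul_le_mul_right (measure_mono (dil_mono Q hcase)) C'
          _ = 1 * (C' * μ (Q.dil ρ)) := (one_mul _).symm
          _ ≤ ENNReal.ofReal (1 + Acond1 + Acond2) * (C' * μ (Q.dil ρ)) :=
              mul_le_mul_left h1A _
          _ = (ENNReal.ofReal (1 + Acond1 + Acond2) * C') * μ (Q.dil ρ) := by ring
      · obtain ⟨s, hcard, hBprop, hnull⟩ := cover_lemma Q M₁ hM₁0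
        set G := (Q.pow2 1).tilde βd with hGdef
        have hG : IsDoubling μ 2 βd G := tilde_doubling hC₀ hβ hg (Q.pow2 1)
        have hconc := concentric_tilde hC₀ hβ hg hC' hr.2 Q
        have hper : ∀ B ∈ s,
            ∫⁻ x in B.set, ENNReal.ofReal |f x - mQ μ (Q.tilde βd) f| ∂μ ≤
              (C' * (1 + ENNReal.ofReal A7)) * μ (Q.dil ρ) := by
          intro B hB
          obtain ⟨hBl, hBc⟩ := hBprop B hB
          have hB2ρ : B.dil 2 ⊆ Q.dil ρ := by
            refine dil_subset_dil (fun i => hBc i) ?_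
            rw [hBl]
            have key : 4 ≤ (M₁:ℝ)*(ρ-1) := by
              have := hM₁ρ
              rw [div_le_iff₀ (by linarith : (0:ℝ) < ρ-1)] at this
              linarith
            have h3 : 4*Q.ℓ/(M₁:ℝ) ≤ (ρ-1)*Q.ℓ := by
              rw [div_le_iff₀ hM₁0']
              nlinarith
            have h2 : 2*(2*Q.ℓ/(M₁:ℝ)) = 4*Q.ℓ/(M₁:ℝ) := by ring
            linarith
          have hBQ1 : B.set ⊆ (Q.pow2 1).set := by
            refine set_subset_set (e := Q.ℓ/2) (fun i => hBc i) ?_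
            rw [hBl, pow2_l, pow_one]
            have h3 : 2*Q.ℓ/(M₁:ℝ) ≤ Q.ℓ := by
              rw [div_le_iff₀ hM₁0']; nlinarith
            linarith
          have hBG : B.set ⊆ G.set := hBQ1.trans (subset_tilde βd (Q.pow2 1))
          have hml := ML hC₀ hβ hg hd hC' hr.2 B G hBG hG
          have hKB : Kcoef n B G ≤ KBG := by
            have hlt : (M₁:ℝ) < 2^M₁ := by
              have := Nat.lt_two_pow_self (n := M₁); exact_mod_cast this
            have h4 : (2:ℝ)^(M₁+2) = 4*2^M₁ := by rw [pow_add]; ring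
            have hK := K_tilde_le (βd := βd) hC₀ hβ hg (Q.pow2 1) B
              ((set_subset_pow2 Q 1) hBc) (by linarith : (1:ℝ) ≤ (M₁:ℝ))
              (by linarith : 2*(1+(M₁:ℝ)) ≤ 2^(M₁+2)) ?_
            · rw [← hGdef] at hK
              rw [hKBGdef]
              convert hK using 4 <;> push_cast <;> ring
            · rw [pow2_l, pow_one, hBl]
              have h5 : (M₁:ℝ)*(2*Q.ℓ/(M₁:ℝ)) = 2*Q.ℓ := by field_simp
              linarith
          have habs : |mQ μ (B.tilde βd) f - mQ μ (Q.tilde βd) f| ≤ C'.toReal * A7 := by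
            have htri : |mQ μ (B.tilde βd) f - mQ μ (Q.tilde βd) f| ≤
                |mQ μ (B.tilde βd) f - mQ μ G f| +
                |mQ μ (Q.tilde βd) f - mQ μ G f| := by
              have h := abs_sub_le (mQ μ (B.tilde βd) f) (mQ μ G f) (mQ μ (Q.tilde βd) f)
              rw [abs_sub_comm (mQ μ G f) (mQ μ (Q.tilde βd) f)] at h
              exact h
            have h1 := hml.trans (mul_le_mul_of_nonneg_left
              (by linarith : Kcoef n B G + AML d n C₀ βd ≤ KBG + AML d n C₀ βd) hc')
            rw [hGdef] at htri
            rw [hGdef] at h1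
            calc |mQ μ (B.tilde βd) f - mQ μ (Q.tilde βd) f| ≤ _ := htri
              _ ≤ C'.toReal * (KBG + AML d n C₀ βd) + C'.toReal * A6c d n C₀ βd :=
                  add_le_add h1 hconc
              _ = C'.toReal * A7 := by rw [hA7def]; ring
          calc ∫⁻ x in B.set, ENNReal.ofReal |f x - mQ μ (Q.tilde βd) f| ∂μ
              ≤ ∫⁻ x in B.set, ENNReal.ofReal |f x - mQ μ (B.tilde βd) f| ∂μ
                + ENNReal.ofReal |mQ μ (B.tilde βd) f - mQ μ (Q.tilde βd) f| * μ B.set :=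
                lint_triangle B.set _ _
            _ ≤ C' * μ (B.dil 2) + (C' * ENNReal.ofReal A7) * μ B.set :=
                add_le_add (hr.1 B) (mul_le_mul_left (extract_to_ofReal habs) _)
            _ ≤ C' * μ (Q.dil ρ) + (C' * ENNReal.ofReal A7) * μ (Q.dil ρ) :=
                add_le_add (mul_le_mul_right (measure_mono hB2ρ) _)
                  (mul_le_mul_right (measure_mono
                    ((set_subset_dil B (by norm_num : (1:ℝ) ≤ 2)).trans hB2ρ)) _)
            _ = (C' * (1 + ENNReal.ofReal A7)) * μ (Q.dil ρ) := by ring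
        calc ∫⁻ x in Q.set, ENNReal.ofReal |f x - mQ μ (Q.tilde βd) f| ∂μ
            ≤ ∑ B ∈ s, ∫⁻ x in B.set, ENNReal.ofReal |f x - mQ μ (Q.tilde βd) f| ∂μ :=
              lintegral_cover_le Q s hnull _
          _ ≤ ∑ _B ∈ s, (C' * (1 + ENNReal.ofReal A7)) * μ (Q.dil ρ) :=
              Finset.sum_le_sum hper
          _ = (s.card : ℝ≥0∞) * (1 + ENNReal.ofReal A7) * (C' * μ (Q.dil ρ)) := by
              rw [Finset.sum_const, nsmul_eq_mul]; ring
          _ ≤ ENNReal.ofReal ((M₁:ℝ)^d) * ENNReal.ofReal (1 + A7) * (C' * μ (Q.dil ρ)) := by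
              refine mul_le_mul_left (mul_le_mul' ?_ ?_) _
              · rw [← ENNReal.ofReal_natCast s.card]
                refine ENNReal.ofReal_le_ofReal ?_
                calc (s.card : ℝ) ≤ ((M₁^d : ℕ) : ℝ) := by exact_mod_cast hcard
                  _ = (M₁:ℝ)^d := by push_cast; ring
              · exact le_of_eq (by rw [ENNReal.ofReal_add zero_le_one hA70,
                  ENNReal.ofReal_one])
          _ = ENNReal.ofReal Acond1 * (C' * μ (Q.dil ρ)) := by
              rw [hAc1def, ENNReal.ofReal_mul (by positivity)]
          _ ≤ ENNReal.ofReal (1 + Acond1 + Acond2) * (C' * μ (Q.dil ρ)) :=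
              mul_le_mul_left (ENNReal.ofReal_le_ofReal (by linarith)) _
          _ = (ENNReal.ofReal (1 + Acond1 + Acond2) * C') * μ (Q.dil ρ) := by ring
    · -- condition 2
      intro Q R hQR
      have hRt : IsDoubling μ 2 βd (R.tilde βd) := tilde_doubling hC₀ hβ hg R
      have hQRt : Q.set ⊆ (R.tilde βd).set := hQR.trans (subset_tilde βd R)
      have hml := ML hC₀ hβ hg hd hC' hr.2 Q (R.tilde βd) hQRt hRt
      have hKadd := K_tilde_add (βd := βd) hC₀ hβ hg Q R hQR
      rw [← hAbdef] at hKadd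
      have hK1 := one_le_Kcoef (μ := μ) (n := n) Q R
      have hreal : |mQ μ (Q.tilde βd) f - mQ μ (R.tilde βd) f| ≤
          C'.toReal * (Acond2 * Kcoef n Q R) := by
        refine hml.trans (mul_le_mul_of_nonneg_left ?_ hc')
        have e1 : (0:ℝ) ≤ (Kcoef n Q R - 1) * Abonus := mul_nonneg (by linarith) hAb0
        have e2 : (0:ℝ) ≤ (Kcoef n Q R - 1) * AML d n C₀ βd :=
          mul_nonneg (by linarith) hAML
        have e3 : Acond2 * Kcoef n Q R
            = Kcoef n Q R + ((Kcoef n Q R - 1)*Abonus + Abonus)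
              + ((Kcoef n Q R - 1)*(AML d n C₀ βd) + AML d n C₀ βd) := by
          rw [hAc2def]; ring
        linarith
      calc ENNReal.ofReal |mQ μ (Q.tilde βd) f - mQ μ (R.tilde βd) f|
          ≤ C' * ENNReal.ofReal (Acond2 * Kcoef n Q R) := extract_to_ofReal hreal
        _ = ENNReal.ofReal Acond2 * C' * ENNReal.ofReal (Kcoef n Q R) := by
            rw [ENNReal.ofReal_mul hAc20]; ring
        _ ≤ ENNReal.ofReal (1 + Acond1 + Acond2) * C' * ENNReal.ofReal (Kcoef n Q R) :=
            mul_le_mul_left (mul_le_mul_left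
              (ENNReal.ofReal_le_ofReal (by linarith)) _) _

end Tolsa28

namespace Tolsa28

variable {d : ℕ} {μ : MeasureTheory.Measure (Euc d)} {n : ℕ} {C₀ βd : ℝ}

open MeasureTheory Metric Set
open scoped ENNReal

lemma K_shift2 (hC₀ : 0 < C₀) (hg : GrowthBound μ n C₀) (hd : 0 < d)
    (Q R : CubeOf μ) (hQR : Q.set ⊆ R.set) :
    Kcoef n (Q.pow2 1) (R.pow2 2) ≤ Kcoef n Q R + 2 * cdC d n C₀ := by
  have hQl : Q.ℓ ≤ R.ℓ := sub_len hd hQR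
  have hQp := Q.ℓ_pos
  set N := NQR Q R with hN
  set N₂ := NQR (Q.pow2 1) (R.pow2 2) with hN₂def
  have hN₂ : N₂ ≤ N + 1 := by
    refine NQR_le (by omega) ?_
    show (R.pow2 2).ℓ ≤ 2^(N+1) * (Q.pow2 1).ℓ
    rw [pow2_l, pow2_l]
    have hspec : R.ℓ ≤ 2^N * Q.ℓ := NQR_spec Q R
    have he : (2:ℝ)^(N+1) * (2^1 * Q.ℓ) = 4*(2^N * Q.ℓ) := by
      rw [pow_succ]; ring
    have he2 : (2:ℝ)^2 * R.ℓ = 4 * R.ℓ := by norm_num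
    rw [he, he2]
    linarith
  have hterm : ∀ k, (μ (((Q.pow2 1).pow2 k).set)).toReal / ((2:ℝ)^k * (Q.pow2 1).ℓ)^n
      = (μ ((Q.pow2 (1+k)).set)).toReal / ((2:ℝ)^(1+k) * Q.ℓ)^n := by
    intro k
    rw [pow2_pow2, pow2_l (Q := Q) 1]
    rw [show (2:ℝ)^k * (2^1 * Q.ℓ) = 2^(1+k) * Q.ℓ by rw [pow_add]; ring]
  unfold Kcoef
  rw [← hN₂def, ← hN]
  have hre : ∑ k ∈ Finset.Icc 1 N₂,
        (μ (((Q.pow2 1).pow2 k).set)).toReal / ((2:ℝ)^k * (Q.pow2 1).ℓ)^n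
      = ∑ j ∈ Finset.Icc 2 (1+N₂),
        (μ ((Q.pow2 j).set)).toReal / ((2:ℝ)^j * Q.ℓ)^n := by
    rw [Finset.sum_congr rfl (fun k _ => hterm k)]
    rw [show (2:ℕ) = 1+1 from rfl]
    rw [← Finset.map_add_left_Icc, Finset.sum_map]
    simp only [addLeftEmbedding_apply]
  rw [hre]
  have h1 : ∑ j ∈ Finset.Icc 2 (1+N₂),
        (μ ((Q.pow2 j).set)).toReal / ((2:ℝ)^j * Q.ℓ)^n
      ≤ ∑ j ∈ Finset.Ioc 0 (N+2),
        (μ ((Q.pow2 j).set)).toReal / ((2:ℝ)^j * Q.ℓ)^n := by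
    refine Finset.sum_le_sum_of_subset_of_nonneg ?_ (fun j _ _ => term_nonneg Q j)
    intro j hj
    rw [Finset.mem_Icc] at hj
    rw [Finset.mem_Ioc]
    omega
  have h2 : ∑ j ∈ Finset.Ioc 0 N, (μ ((Q.pow2 j).set)).toReal / ((2:ℝ)^j * Q.ℓ)^n
      + ∑ j ∈ Finset.Ioc N (N+2), (μ ((Q.pow2 j).set)).toReal / ((2:ℝ)^j * Q.ℓ)^n
      = ∑ j ∈ Finset.Ioc 0 (N+2), (μ ((Q.pow2 j).set)).toReal / ((2:ℝ)^j * Q.ℓ)^n :=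
    Finset.sum_Ioc_consecutive _ (Nat.zero_le N) (by omega)
  have h3 : ∑ j ∈ Finset.Ioc N (N+2),
      (μ ((Q.pow2 j).set)).toReal / ((2:ℝ)^j * Q.ℓ)^n ≤ 2 * cdC d n C₀ := by
    calc ∑ j ∈ Finset.Ioc N (N+2), (μ ((Q.pow2 j).set)).toReal / ((2:ℝ)^j * Q.ℓ)^n
        ≤ ∑ _j ∈ Finset.Ioc N (N+2), cdC d n C₀ :=
          Finset.sum_le_sum (fun j _ => term_le hC₀ hg Q j)
      _ = 2 * cdC d n C₀ := by
          rw [Finset.sum_const, Nat.card_Ioc, nsmul_eq_mul]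
          norm_num
  rw [Icc_eq_Ioc N]
  linarith

set_option maxHeartbeats 3000000 in
lemma P2_ex {d n : ℕ} {C₀ βd ρ : ℝ} (hn : 1 ≤ n) (hnd : n ≤ d) (hC₀ : 0 < C₀)
    (hβ : (2:ℝ)^n < βd) (hρ : 1 < ρ) :
    ∃ A : ℝ, 1 ≤ A ∧ ∀ (μ : MeasureTheory.Measure (Euc d)), GrowthBound μ n C₀ →
      ∀ f : Euc d → ℝ, MeasureTheory.LocallyIntegrable f μ →
      ∀ (C' : ℝ≥0∞) (fQ : CubeOf μ → ℝ), StarStarBoundWith μ n ρ f fQ C' →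
        RBMOBoundWith μ n βd f (ENNReal.ofReal A * C') := by
  classical
  have hd : 0 < d := lt_of_lt_of_le hn hnd
  have hcd := cdC_pos (d := d) (n := n) hC₀
  have hβ0 := βd_pos (n := n) hβ
  have hr1 := rK_lt_one (n := n) hβ
  have hr0 := rK_nonneg (n := n) hβ
  have hinv : (0:ℝ) < 1/(1-rK n βd) := by
    have : (0:ℝ) < 1 - rK n βd := by linarith
    positivity
  obtain ⟨M₀, hM₀2, hM₀ρ⟩ : ∃ M : ℕ, 2 ≤ M ∧ 2*ρ ≤ (M:ℝ) := by
    refine ⟨2 + Nat.ceil (2*ρ), by omega, ?_⟩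
    calc 2*ρ ≤ (Nat.ceil (2*ρ) : ℝ) := Nat.le_ceil _
      _ ≤ ((2 + Nat.ceil (2*ρ) : ℕ) : ℝ) := by
          exact_mod_cast Nat.cast_le.mpr (Nat.le_add_left _ 2)
  have hM₀R : (2:ℝ) ≤ (M₀:ℝ) := by exact_mod_cast Nat.cast_le.mpr hM₀2
  have hM₀0' : (0:ℝ) < (M₀:ℝ) := by linarith
  set κ₂ : ℝ := 1 + (M₀:ℝ) * cdC d n C₀ with hκ₂def
  have hκ₂0 : (0:ℝ) ≤ κ₂ := by
    rw [hκ₂def]; nlinarith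
  set A' : ℝ := (M₀:ℝ)^d * (1 + κ₂) with hA'def
  have hA'0 : (0:ℝ) ≤ A' := by
    rw [hA'def]; positivity
  set κA : ℝ := 1 + (2*(1+(1:ℝ)))^n * cdC d n C₀ * (1/(1-rK n βd) + (((2:ℕ):ℝ)+1))
    with hκAdef
  have hκA0 : (0:ℝ) ≤ κA := by
    rw [hκAdef]
    have h1 : (0:ℝ) ≤ (2*(1+(1:ℝ)))^n := by positivity
    have h2 := mul_nonneg (mul_nonneg h1 hcd.le)
      (by push_cast; linarith : (0:ℝ) ≤ 1/(1-rK n βd) + (((2:ℕ):ℝ)+1))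
    linarith
  set Φ₁ : ℝ := A'*βd + κA + (1+cdC d n C₀) + A'*βd with hΦ₁def
  have hΦ₁0 : (0:ℝ) ≤ Φ₁ := by
    rw [hΦ₁def]
    have := mul_nonneg hA'0 hβ0.le
    nlinarith
  set Φ₂ : ℝ := 1 + (2*(A'*βd) + 3*cdC d n C₀ + 1 + cdC d n C₀) with hΦ₂def
  have hΦ₂0 : (0:ℝ) ≤ Φ₂ := by
    rw [hΦ₂def]
    have := mul_nonneg hA'0 hβ0.le
    nlinarith
  refine ⟨1 + (A' + Φ₁) + Φ₂, by linarith, ?_⟩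
  intro μ hg f hf C' fQ hss
  by_cases hC' : C' = ⊤
  · subst hC'
    have hA0 : (ENNReal.ofReal (1 + (A' + Φ₁) + Φ₂)) ≠ 0 := by
      rw [ne_eq, ENNReal.ofReal_eq_zero, not_le]; linarith
    rw [ENNReal.mul_top hA0]
    constructor
    · intro Q
      have hpos : μ (Q.dil 2) ≠ 0 :=
        ne_of_gt (lt_of_lt_of_le (set_pos Q)
          (measure_mono (set_subset_dil Q (by norm_num))))
      rw [ENNReal.top_mul hpos]
      exact le_top
    · intro Q R hQR _ _
      have hpos : ENNReal.ofReal (Kcoef n Q R) ≠ 0 := by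
        rw [ne_eq, ENNReal.ofReal_eq_zero, not_le]
        linarith [one_le_Kcoef (μ := μ) (n := n) Q R]
      rw [ENNReal.top_mul hpos]
      exact le_top
  · have hc' : (0:ℝ) ≤ C'.toReal := ENNReal.toReal_nonneg
    -- Step 1': covering estimate for every cube P
    have hstep1 : ∀ P : CubeOf μ,
        ∫⁻ x in P.set, ENNReal.ofReal |f x - fQ (P.pow2 1)| ∂μ ≤
          (C' * ENNReal.ofReal A') * μ (P.dil 2) := by
      intro P
      have hPl := P.ℓ_pos
      obtain ⟨s, hcard, hBprop, hnull⟩ := cover_lemma P M₀ (by omega)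
      have hper : ∀ B ∈ s,
          ∫⁻ x in B.set, ENNReal.ofReal |f x - fQ (P.pow2 1)| ∂μ ≤
            (C' * (1 + ENNReal.ofReal κ₂)) * μ (P.dil 2) := by
        intro B hB
        obtain ⟨hBl, hBc⟩ := hBprop B hB
        have hBP1 : B.set ⊆ (P.pow2 1).set := by
          refine set_subset_set (e := P.ℓ/2) (fun i => hBc i) ?_
          rw [hBl, pow2_l, pow_one]
          have h3 : 2*P.ℓ/(M₀:ℝ) ≤ P.ℓ := by
            rw [div_le_iff₀ hM₀0']; nlinarith
          linarith
        have hBρ2 : B.dil ρ ⊆ P.dil 2 := by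
          refine dil_subset_dil (fun i => hBc i) ?_
          rw [hBl]
          have h3 : ρ*(2*P.ℓ/(M₀:ℝ)) ≤ P.ℓ := by
            rw [mul_div_assoc', div_le_iff₀ hM₀0']
            nlinarith
          linarith
        have hK : Kcoef n B (P.pow2 1) ≤ κ₂ := by
          rw [hκ₂def]
          refine Kcoef_le hC₀ hg B (P.pow2 1) ?_
          refine NQR_le (by omega) ?_
          show (P.pow2 1).ℓ ≤ 2^M₀ * B.ℓ
          rw [pow2_l, pow_one, hBl]
          have hlt : (M₀:ℝ) < 2^M₀ := by
            have := Nat.lt_two_pow_self (n := M₀); exact_mod_cast this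
          have h5 : (2:ℝ)^M₀ * (2*P.ℓ/(M₀:ℝ)) = 2^M₀/(M₀:ℝ) * (2*P.ℓ) := by ring
          rw [h5]
          have h6 : (1:ℝ) ≤ 2^M₀/(M₀:ℝ) := by
            rw [le_div_iff₀ hM₀0']; linarith
          nlinarith
        have hfq : ENNReal.ofReal |fQ B - fQ (P.pow2 1)| ≤ C' * ENNReal.ofReal κ₂ := by
          refine (hss.2 B (P.pow2 1) hBP1).trans ?_
          exact mul_le_mul_right (ENNReal.ofReal_le_ofReal hK) C'
        calc ∫⁻ x in B.set, ENNReal.ofReal |f x - fQ (P.pow2 1)| ∂μ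
            ≤ ∫⁻ x in B.set, ENNReal.ofReal |f x - fQ B| ∂μ
              + ENNReal.ofReal |fQ B - fQ (P.pow2 1)| * μ B.set :=
              lint_triangle B.set _ _
          _ ≤ C' * μ (B.dil ρ) + (C' * ENNReal.ofReal κ₂) * μ B.set :=
              add_le_add (hss.1 B) (mul_le_mul_left hfq _)
          _ ≤ C' * μ (P.dil 2) + (C' * ENNReal.ofReal κ₂) * μ (P.dil 2) :=
              add_le_add (mul_le_mul_right (measure_mono hBρ2) _)
                (mul_le_mul_right (measure_mono
                  ((set_subset_dil B hρ.le).trans hBρ2)) _)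
          _ = (C' * (1 + ENNReal.ofReal κ₂)) * μ (P.dil 2) := by ring
      calc ∫⁻ x in P.set, ENNReal.ofReal |f x - fQ (P.pow2 1)| ∂μ
          ≤ ∑ B ∈ s, ∫⁻ x in B.set, ENNReal.ofReal |f x - fQ (P.pow2 1)| ∂μ :=
            lintegral_cover_le P s hnull _
        _ ≤ ∑ _B ∈ s, (C' * (1 + ENNReal.ofReal κ₂)) * μ (P.dil 2) :=
            Finset.sum_le_sum hper
        _ = (s.card : ℝ≥0∞) * (1 + ENNReal.ofReal κ₂) * (C' * μ (P.dil 2)) := by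
            rw [Finset.sum_const, nsmul_eq_mul]; ring
        _ ≤ ENNReal.ofReal ((M₀:ℝ)^d) * ENNReal.ofReal (1 + κ₂) * (C' * μ (P.dil 2)) := by
            refine mul_le_mul_left (mul_le_mul' ?_ ?_) _
            · rw [← ENNReal.ofReal_natCast s.card]
              refine ENNReal.ofReal_le_ofReal ?_
              calc (s.card : ℝ) ≤ ((M₀^d : ℕ) : ℝ) := by exact_mod_cast hcard
                _ = (M₀:ℝ)^d := by push_cast; ring
            · exact le_of_eq (by rw [ENNReal.ofReal_add zero_le_one hκ₂0,
                ENNReal.ofReal_one])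
        _ = ENNReal.ofReal A' * (C' * μ (P.dil 2)) := by
            rw [hA'def, ENNReal.ofReal_mul (by positivity)]
        _ = (C' * ENNReal.ofReal A') * μ (P.dil 2) := by ring
    -- Step 1d: mean comparison at doubling cubes
    have hstep1d : ∀ P : CubeOf μ, IsDoubling μ 2 βd P →
        |mQ μ P f - fQ (P.pow2 1)| ≤ C'.toReal * (A'*βd) := by
      intro P hPd
      have hne0 : μ P.set ≠ 0 := ne_of_gt (set_pos P)
      have hnet : μ P.set ≠ ⊤ := set_ne_top hg P
      have h1 : ENNReal.ofReal |mQ μ P f - fQ (P.pow2 1)| * μ P.set ≤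
          (C' * ENNReal.ofReal (A'*βd)) * μ P.set := by
        calc ENNReal.ofReal |mQ μ P f - fQ (P.pow2 1)| * μ P.set
            ≤ ∫⁻ x in P.set, ENNReal.ofReal |f x - fQ (P.pow2 1)| ∂μ :=
              mean_dev_lint hg hf P _
          _ ≤ (C' * ENNReal.ofReal A') * μ (P.dil 2) := hstep1 P
          _ ≤ (C' * ENNReal.ofReal A') * (ENNReal.ofReal βd * μ P.set) :=
              mul_le_mul_right hPd _
          _ = (C' * ENNReal.ofReal (A'*βd)) * μ P.set := by
              rw [ENNReal.ofReal_mul hA'0]; ring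
      have h2 := (ENNReal.mul_le_mul_iff_left hne0 hnet).mp h1
      exact ofReal_le_extract hC' (mul_nonneg hA'0 hβ0.le) h2
    constructor
    · -- RBMO condition 1
      intro Q
      have hsc : |fQ (Q.pow2 1) - mQ μ (Q.tilde βd) f| ≤ C'.toReal * Φ₁ := by
        have hQtd : IsDoubling μ 2 βd (Q.tilde βd) := tilde_doubling hC₀ hβ hg Q
        have hs1d := hstep1d (Q.tilde βd) hQtd
        rcases Nat.eq_zero_or_pos (tildeIdx μ βd Q) with ht0 | ht0
        · have hQt : Q.tilde βd = Q := by rw [tilde_def, ht0, pow2_zero]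
          rw [hQt]
          rw [hQt] at hs1d
          rw [abs_sub_comm]
          refine hs1d.trans ?_
          rw [hΦ₁def]
          have h1 := mul_nonneg hc' (mul_nonneg hA'0 hβ0.le)
          have h2 := mul_nonneg hc' hκA0
          have h3 := mul_nonneg hc' (by linarith : (0:ℝ) ≤ 1 + cdC d n C₀)
          nlinarith
        · -- tildeIdx ≥ 1
          have hQ2t : (Q.pow2 1).set ⊆ (Q.tilde βd).set := by
            rw [tilde_def]
            exact pow2_set_mono Q (by omega)
          have hKA : Kcoef n (Q.pow2 1) (Q.tilde βd) ≤ κA := by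
            rw [hκAdef]
            refine K_tilde_le (βd := βd) hC₀ hβ hg Q (Q.pow2 1) (c_mem_set Q)
              le_rfl (by norm_num : 2*(1+(1:ℝ)) ≤ 2^2) ?_
            rw [one_mul, pow2_l, pow_one]
            nlinarith [Q.ℓ_pos]
          have h₁ : |fQ (Q.pow2 1) - fQ (Q.tilde βd)| ≤ C'.toReal * κA := by
            refine (ofReal_le_extract hC' (Kcoef_nonneg _ _)
              (hss.2 (Q.pow2 1) (Q.tilde βd) hQ2t)).trans ?_
            exact mul_le_mul_of_nonneg_left hKA hc'
          have h₂ : |fQ (Q.tilde βd) - fQ ((Q.tilde βd).pow2 1)| ≤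
              C'.toReal * (1 + cdC d n C₀) := by
            have hsub := set_subset_pow2 (Q.tilde βd) 1
            have hKB : Kcoef n (Q.tilde βd) ((Q.tilde βd).pow2 1) ≤
                1 + 1 * cdC d n C₀ := by
              refine le_trans (Kcoef_le hC₀ hg _ _ (NQR_le le_rfl ?_))
                (le_of_eq (by push_cast; ring))
              rw [pow2_l, pow_one]
              

            refine (ofReal_le_extract hC' (Kcoef_nonneg _ _)
              (hss.2 _ _ hsub)).trans ?_
            refine (mul_le_mul_of_nonneg_left hKB hc').trans ?_
            rw [one_mul]
          have h₃ : |fQ ((Q.tilde βd).pow2 1) - mQ μ (Q.tilde βd) f| ≤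
              C'.toReal * (A'*βd) := by
            rw [abs_sub_comm]
            exact hs1d
          have htri : |fQ (Q.pow2 1) - mQ μ (Q.tilde βd) f| ≤
              |fQ (Q.pow2 1) - fQ (Q.tilde βd)| +
              (|fQ (Q.tilde βd) - fQ ((Q.tilde βd).pow2 1)| +
                |fQ ((Q.tilde βd).pow2 1) - mQ μ (Q.tilde βd) f|) := by
            have t1 := abs_sub_le (fQ (Q.pow2 1)) (fQ (Q.tilde βd)) (mQ μ (Q.tilde βd) f)
            have t2 := abs_sub_le (fQ (Q.tilde βd)) (fQ ((Q.tilde βd).pow2 1))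
              (mQ μ (Q.tilde βd) f)
            linarith
          rw [hΦ₁def]
          have h4 := mul_nonneg hc' (mul_nonneg hA'0 hβ0.le)
          nlinarith [htri, h₁, h₂, h₃]
      calc ∫⁻ x in Q.set, ENNReal.ofReal |f x - mQ μ (Q.tilde βd) f| ∂μ
          ≤ ∫⁻ x in Q.set, ENNReal.ofReal |f x - fQ (Q.pow2 1)| ∂μ
            + ENNReal.ofReal |fQ (Q.pow2 1) - mQ μ (Q.tilde βd) f| * μ Q.set :=
            lint_triangle Q.set _ _
        _ ≤ (C' * ENNReal.ofReal A') * μ (Q.dil 2)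
            + (C' * ENNReal.ofReal Φ₁) * μ (Q.dil 2) := by
            refine add_le_add (hstep1 Q) ?_
            refine mul_le_mul' (extract_to_ofReal hsc)
              (measure_mono (set_subset_dil Q (by norm_num)))
        _ = (C' * (ENNReal.ofReal A' + ENNReal.ofReal Φ₁)) * μ (Q.dil 2) := by ring
        _ ≤ (ENNReal.ofReal (1 + (A' + Φ₁) + Φ₂) * C') * μ (Q.dil 2) := by
            refine mul_le_mul_left ?_ _
            rw [← ENNReal.ofReal_add hA'0 hΦ₁0]
            rw [mul_comm]
            refine mul_le_mul_left (ENNReal.ofReal_le_ofReal (by linarith)) _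
    · -- RBMO condition 2
      intro Q R hQR hQd hRd
      have hQl : Q.ℓ ≤ R.ℓ := sub_len hd hQR
      have hRl := R.ℓ_pos
      have h₁ : |mQ μ Q f - fQ (Q.pow2 1)| ≤ C'.toReal * (A'*βd) := hstep1d Q hQd
      have h₄ : |fQ (R.pow2 1) - mQ μ R f| ≤ C'.toReal * (A'*βd) := by
        rw [abs_sub_comm]; exact hstep1d R hRd
      have hsub24 : (Q.pow2 1).set ⊆ (R.pow2 2).set := by
        refine set_subset_set (e := R.ℓ/2) ?_ ?_
        · intro i
          exact hQR (c_mem_set Q) i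
        · rw [pow2_l, pow_one, pow2_l]
          have : (2:ℝ)^2 = 4 := by norm_num
          rw [this]
          linarith
      have hK24 : Kcoef n (Q.pow2 1) (R.pow2 2) ≤ Kcoef n Q R + 2*cdC d n C₀ :=
        K_shift2 hC₀ hg hd Q R hQR
      have h₂ : |fQ (Q.pow2 1) - fQ (R.pow2 2)| ≤
          C'.toReal * (Kcoef n Q R + 2*cdC d n C₀) := by
        refine (ofReal_le_extract hC' (Kcoef_nonneg _ _)
          (hss.2 _ _ hsub24)).trans ?_
        exact mul_le_mul_of_nonneg_left hK24 hc'
      have hsub12 : (R.pow2 1).set ⊆ (R.pow2 2).set := pow2_set_mono R (by omega)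
      have h₃ : |fQ (R.pow2 1) - fQ (R.pow2 2)| ≤ C'.toReal * (1 + cdC d n C₀) := by
        have hKB : Kcoef n (R.pow2 1) (R.pow2 2) ≤ 1 + 1 * cdC d n C₀ := by
          refine le_trans (Kcoef_le hC₀ hg _ _ (NQR_le le_rfl ?_))
            (le_of_eq (by push_cast; ring))
          show (R.pow2 2).ℓ ≤ 2^1 * (R.pow2 1).ℓ
          rw [pow2_l, pow2_l]
          have e1 : (2:ℝ)^1 * (2^1 * R.ℓ) = 4*R.ℓ := by ring
          have e2 : (2:ℝ)^2 * R.ℓ = 4*R.ℓ := by ring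
          rw [e1, e2]
        refine (ofReal_le_extract hC' (Kcoef_nonneg _ _)
          (hss.2 _ _ hsub12)).trans ?_
        refine (mul_le_mul_of_nonneg_left hKB hc').trans (le_of_eq ?_)
        rw [one_mul]
      have hK1 := one_le_Kcoef (μ := μ) (n := n) Q R
      have hreal : |mQ μ Q f - mQ μ R f| ≤ C'.toReal * (Φ₂ * Kcoef n Q R) := by
        have htri : |mQ μ Q f - mQ μ R f| ≤
            |mQ μ Q f - fQ (Q.pow2 1)| + (|fQ (Q.pow2 1) - fQ (R.pow2 2)| +
              (|fQ (R.pow2 2) - fQ (R.pow2 1)| + |fQ (R.pow2 1) - mQ μ R f|)) := by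
          have t1 := abs_sub_le (mQ μ Q f) (fQ (Q.pow2 1)) (mQ μ R f)
          have t2 := abs_sub_le (fQ (Q.pow2 1)) (fQ (R.pow2 2)) (mQ μ R f)
          have t3 := abs_sub_le (fQ (R.pow2 2)) (fQ (R.pow2 1)) (mQ μ R f)
          linarith
        rw [abs_sub_comm (fQ (R.pow2 2))] at htri
        have hE : |mQ μ Q f - mQ μ R f| ≤
            C'.toReal * (Kcoef n Q R + (2*(A'*βd) + 3*cdC d n C₀ + 1)) := by
          calc |mQ μ Q f - mQ μ R f| ≤ _ := htri
            _ ≤ C'.toReal * (A'*βd) + (C'.toReal * (Kcoef n Q R + 2*cdC d n C₀) +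
                (C'.toReal * (1 + cdC d n C₀) + C'.toReal * (A'*βd))) := by
                refine add_le_add h₁ (add_le_add h₂ (add_le_add h₃ h₄))
            _ = C'.toReal * (Kcoef n Q R + (2*(A'*βd) + 3*cdC d n C₀ + 1)) := by ring
        refine hE.trans (mul_le_mul_of_nonneg_left ?_ hc')
        have hE0 : (0:ℝ) ≤ 2*(A'*βd) + 3*cdC d n C₀ + 1 + cdC d n C₀ := by
          have := mul_nonneg hA'0 hβ0.le
          nlinarith
        have e3 : Φ₂ * Kcoef n Q R = Kcoef n Q R
            + ((Kcoef n Q R - 1) * (2*(A'*βd) + 3*cdC d n C₀ + 1 + cdC d n C₀)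
              + (2*(A'*βd) + 3*cdC d n C₀ + 1 + cdC d n C₀)) := by
          rw [hΦ₂def]; ring
        have e1 : (0:ℝ) ≤ (Kcoef n Q R - 1) *
            (2*(A'*βd) + 3*cdC d n C₀ + 1 + cdC d n C₀) :=
          mul_nonneg (by linarith) hE0
        have hcd0 : (0:ℝ) ≤ cdC d n C₀ := hcd.le
        linarith
      calc ENNReal.ofReal |mQ μ Q f - mQ μ R f|
          ≤ C' * ENNReal.ofReal (Φ₂ * Kcoef n Q R) := extract_to_ofReal hreal
        _ = ENNReal.ofReal Φ₂ * C' * ENNReal.ofReal (Kcoef n Q R) := by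
            rw [ENNReal.ofReal_mul hΦ₂0]; ring
        _ ≤ ENNReal.ofReal (1 + (A' + Φ₁) + Φ₂) * C' * ENNReal.ofReal (Kcoef n Q R) :=
            mul_le_mul_left (mul_le_mul_left
              (ENNReal.ofReal_le_ofReal (by linarith)) _) _

end Tolsa28

set_option maxHeartbeats 1000000 in
/-- Lemma 2.8: for fixed `ρ > 1` the norms `‖·‖_*` and `‖·‖_{**,(ρ)}` are equivalent;
moreover the choice `f_Q = m_{Q̃} f` realizes the defining conditions of `‖·‖_{**,(ρ)}`
with constant `C ‖f‖_*`. -/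
theorem statement2 (d n : ℕ) (hn : 1 ≤ n) (hnd : n ≤ d) (C₀ βd ρ : ℝ) (hC₀ : 0 < C₀)
    (hβ : (2 : ℝ) ^ n < βd) (hρ : 1 < ρ) :
    ∃ C : ℝ, 1 ≤ C ∧ ∀ μ : MeasureTheory.Measure (Euc d), GrowthBound μ n C₀ →
      SmallDoublingAE μ βd →
      ∀ f : Euc d → ℝ, MeasureTheory.LocallyIntegrable f μ →
        rbmoNorm μ n βd f ≤ ENNReal.ofReal C * starStarNorm μ n ρ f ∧
        starStarNorm μ n ρ f ≤ ENNReal.ofReal C * rbmoNorm μ n βd f ∧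
        StarStarBoundWith μ n ρ f (fun Q => mQ μ (Q.tilde βd) f)
          (ENNReal.ofReal C * rbmoNorm μ n βd f) := by
  classical
  obtain ⟨A₁, hA₁1, hP1⟩ := Tolsa28.P1_ex (C₀ := C₀) (βd := βd) hn hnd hC₀ hβ hρ
  obtain ⟨A₂, hA₂1, hP2⟩ := Tolsa28.P2_ex (C₀ := C₀) (βd := βd) hn hnd hC₀ hβ hρ
  refine ⟨A₁ + A₂, by linarith, ?_⟩
  intro μ hg _hsd f hf
  have hC1 : (1:ℝ) ≤ A₁ + A₂ := by linarith
  have hCne0 : ENNReal.ofReal (A₁ + A₂) ≠ 0 := by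
    rw [ne_eq, ENNReal.ofReal_eq_zero, not_le]; linarith
  have hCnetop : ENNReal.ofReal (A₁ + A₂) ≠ ⊤ := ENNReal.ofReal_ne_top
  have hthird : StarStarBoundWith μ n ρ f (fun Q => mQ μ (Q.tilde βd) f)
      (ENNReal.ofReal (A₁ + A₂) * rbmoNorm μ n βd f) := by
    constructor
    · intro Q
      have hμ0 : μ (Q.dil ρ) ≠ 0 :=
        ne_of_gt (lt_of_lt_of_le (Tolsa28.set_pos Q)
          (measure_mono (Tolsa28.set_subset_dil Q hρ.le)))
      have hμt : μ (Q.dil ρ) ≠ ⊤ := Tolsa28.dil_ne_top hg Q (by linarith)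
      have hall : ∀ C' ∈ {C | RBMOBoundWith μ n βd f C},
          ∫⁻ x in Q.set, ENNReal.ofReal |f x - mQ μ (Q.tilde βd) f| ∂μ ≤
            (ENNReal.ofReal (A₁ + A₂) * μ (Q.dil ρ)) * C' := by
        intro C' hC'
        have h1 := (hP1 μ hg f hf C' hC').1 Q
        refine h1.trans ?_
        calc ENNReal.ofReal A₁ * C' * μ (Q.dil ρ)
            ≤ ENNReal.ofReal (A₁ + A₂) * C' * μ (Q.dil ρ) :=
              mul_le_mul_left (mul_le_mul_left
                (ENNReal.ofReal_le_ofReal (by linarith)) _) _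
          _ = (ENNReal.ofReal (A₁ + A₂) * μ (Q.dil ρ)) * C' := by ring
      have hb := Tolsa28.le_mul_sInf (mul_ne_zero hCne0 hμ0)
        (ENNReal.mul_ne_top hCnetop hμt) hall
      simp only [rbmoNorm]
      refine hb.trans (le_of_eq ?_)
      ring
    · intro Q R hQR
      have hK1 := Tolsa28.one_le_Kcoef (μ := μ) (n := n) Q R
      have hK0 : ENNReal.ofReal (Kcoef n Q R) ≠ 0 := by
        rw [ne_eq, ENNReal.ofReal_eq_zero, not_le]; linarith
      have hall : ∀ C' ∈ {C | RBMOBoundWith μ n βd f C},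
          ENNReal.ofReal |mQ μ (Q.tilde βd) f - mQ μ (R.tilde βd) f| ≤
            (ENNReal.ofReal (A₁ + A₂) * ENNReal.ofReal (Kcoef n Q R)) * C' := by
        intro C' hC'
        have h1 := (hP1 μ hg f hf C' hC').2 Q R hQR
        refine h1.trans ?_
        calc ENNReal.ofReal A₁ * C' * ENNReal.ofReal (Kcoef n Q R)
            ≤ ENNReal.ofReal (A₁ + A₂) * C' * ENNReal.ofReal (Kcoef n Q R) :=
              mul_le_mul_left (mul_le_mul_left
                (ENNReal.ofReal_le_ofReal (by linarith)) _) _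
          _ = (ENNReal.ofReal (A₁ + A₂) * ENNReal.ofReal (Kcoef n Q R)) * C' := by ring
      have hb := Tolsa28.le_mul_sInf (mul_ne_zero hCne0 hK0)
        (ENNReal.mul_ne_top hCnetop ENNReal.ofReal_ne_top) hall
      simp only [rbmoNorm]
      refine hb.trans (le_of_eq ?_)
      ring
  refine ⟨?_, ?_, hthird⟩
  · simp only [starStarNorm]
    refine Tolsa28.le_mul_sInf hCne0 hCnetop ?_
    intro C'' hC''
    obtain ⟨fQ, hfQ⟩ := hC''
    have hmem : RBMOBoundWith μ n βd f (ENNReal.ofReal A₂ * C'') :=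
      hP2 μ hg f hf C'' fQ hfQ
    have h1 : rbmoNorm μ n βd f ≤ ENNReal.ofReal A₂ * C'' := sInf_le hmem
    refine h1.trans ?_
    exact mul_le_mul_left (ENNReal.ofReal_le_ofReal (by linarith)) _
  · exact sInf_le ⟨_, hthird⟩
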